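/- arXiv:1204.2887 — 7 statements merged into one kernel-verified Lean document; each statement's English description precedes it below -/
import Mathlib

section
/- (Jarník) A typical function f ∈ C(I) has the property that D⁺f(x) = D⁻f(x) = ∞ and D₊f(x) = D₋f(x) = −∞ for Lebesgue-almost every x ∈ (0,1). -/
/-!
Fix `a ∈ ℕ`. The graph `{(f, x) | x ∈ N(f,a)}` is closed in `C(I) × I`, and `I` is compact, so
`f ↦ N(f,a)` is upper semicontinuous and `{f | λ(N(f,a)) < ε}` is open. It is also dense: add to
`f` a zigzag `h · tent (N x)` of small height `h` but slope `2hN ≫ a`. If `x ∈ N(f + zigzag, a)`,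
comparing `x` with the next peak or valley (at distance `≤ 1/N ≤ 2^{-a}`) shows that the zigzag is
within `a/N + ω` of its extreme values at `x`, `ω` being the oscillation of `f` at scale `1/N`; such
points lie near `(2N)⁻¹ ℤ` and have small total measure. So a typical `f` has `λ(N(f,a)) = 0` for
all `a`, while a point of `(0,1)` at which one Dini derivative is finite lies in some `N(f,a)`.
Replacing `f` by `-f` and reflecting `x ↦ 1 - x` reduces all four one-sided sets to `N⁺`.
-/

open Filter Topology TopologicalSpace Set MeasureTheory

noncomputable section

/-- The unit interval `I = [0,1]` as a type. -/
abbrev UI : Type := ↥(Set.Icc (0:ℝ) 1)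

/-- The space `𝒦` of closed subsets of `I`, with the (extended) Hausdorff metric topology. -/
abbrev KSp : Type := TopologicalSpace.Closeds UI

/-- The open `r`-neighbourhood of a set `A` within `I`. -/
def nbhd (A : Set UI) (r : ℝ) : Set UI := ⋃ a ∈ A, Metric.ball a r

/-- Upper right Dini derivative `D⁺f(x)`, as an extended real. -/
def DiniSupR (f : UI → ℝ) (x : UI) : EReal :=
  Filter.limsup (fun y : UI => (((f y - f x) / ((y : ℝ) - (x : ℝ))) : EReal)) (𝓝[>] x)

/-- Lower right Dini derivative `D₊f(x)`. -/
def DiniInfR (f : UI → ℝ) (x : UI) : EReal :=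
  Filter.liminf (fun y : UI => (((f y - f x) / ((y : ℝ) - (x : ℝ))) : EReal)) (𝓝[>] x)

/-- Upper left Dini derivative `D⁻f(x)`. -/
def DiniSupL (f : UI → ℝ) (x : UI) : EReal :=
  Filter.limsup (fun y : UI => (((f y - f x) / ((y : ℝ) - (x : ℝ))) : EReal)) (𝓝[<] x)

/-- Lower left Dini derivative `D₋f(x)`. -/
def DiniInfL (f : UI → ℝ) (x : UI) : EReal :=
  Filter.liminf (fun y : UI => (((f y - f x) / ((y : ℝ) - (x : ℝ))) : EReal)) (𝓝[<] x)

/-- `x` is a knot point of `f`. -/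
def IsKnotPoint (f : UI → ℝ) (x : UI) : Prop :=
  (0 < (x:ℝ) ∧ (x:ℝ) < 1 ∧ DiniSupR f x = ⊤ ∧ DiniSupL f x = ⊤ ∧
      DiniInfR f x = ⊥ ∧ DiniInfL f x = ⊥) ∨
  ((x:ℝ) = 0 ∧ DiniSupR f x = ⊤ ∧ DiniInfR f x = ⊥) ∨
  ((x:ℝ) = 1 ∧ DiniSupL f x = ⊤ ∧ DiniInfL f x = ⊥)

/-- `N(f)`: the set of points of `I` that are not knot points of `f`. -/
def NonKnot (f : UI → ℝ) : Set UI := {x | ¬ IsKnotPoint f x}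

/-- `S` is an `Fσ` subset of `I`. -/
def IsFsigma (S : Set UI) : Prop :=
  ∃ F : ℕ → Set UI, (∀ n, IsClosed (F n)) ∧ S = ⋃ n, F n

/-- `N⁺(f,a)`. -/
def NplusUp (f : UI → ℝ) (a : ℝ) : Set UI :=
  {x | (x:ℝ) ≤ 1 - 2^(-a) ∧
    ∀ y : UI, (x:ℝ) ≤ (y:ℝ) → (y:ℝ) ≤ (x:ℝ) + 2^(-a) →
      f y - f x ≤ a * ((y:ℝ) - (x:ℝ))}

/-- `N₊(f,a)`. -/
def NplusLow (f : UI → ℝ) (a : ℝ) : Set UI :=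
  {x | (x:ℝ) ≤ 1 - 2^(-a) ∧
    ∀ y : UI, (x:ℝ) ≤ (y:ℝ) → (y:ℝ) ≤ (x:ℝ) + 2^(-a) →
      -a * ((y:ℝ) - (x:ℝ)) ≤ f y - f x}

/-- `N⁻(f,a)`. -/
def NminusUp (f : UI → ℝ) (a : ℝ) : Set UI :=
  {x | 2^(-a) ≤ (x:ℝ) ∧
    ∀ y : UI, (x:ℝ) - 2^(-a) ≤ (y:ℝ) → (y:ℝ) ≤ (x:ℝ) →
      a * ((y:ℝ) - (x:ℝ)) ≤ f y - f x}

/-- `N₋(f,a)`. -/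
def NminusLow (f : UI → ℝ) (a : ℝ) : Set UI :=
  {x | 2^(-a) ≤ (x:ℝ) ∧
    ∀ y : UI, (x:ℝ) - 2^(-a) ≤ (y:ℝ) → (y:ℝ) ≤ (x:ℝ) →
      f y - f x ≤ -a * ((y:ℝ) - (x:ℝ))}

/-- `N̂(f,a) = N⁺(f,a) ∪ N₋(f,a)`. -/
def Nhat (f : UI → ℝ) (a : ℝ) : Set UI := NplusUp f a ∪ NminusLow f a

/-- `Ň(f,a) = N₊(f,a) ∪ N⁻(f,a)`. -/
def Ncheck (f : UI → ℝ) (a : ℝ) : Set UI := NplusLow f a ∪ NminusUp f a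

/-- `N(f,a)`. -/
def NN (f : UI → ℝ) (a : ℝ) : Set UI := Nhat f a ∪ Ncheck f a

/-- `f : I → ℝ` is continuously differentiable on `I`. -/
def IsC1 (f : UI → ℝ) : Prop :=
  ContDiffOn ℝ 1 (Set.IccExtend (zero_le_one : (0:ℝ) ≤ 1) f) (Set.Icc (0:ℝ) 1)

/-- `φ` is a bump function of height `h` and width `w` located at `H1` and `H2`. -/
def IsBump (φ : C(UI, ℝ)) (h w : ℝ) (H1 H2 : Set UI) : Prop :=
  IsC1 ⇑φ ∧ ‖φ‖ = h ∧ (∀ x ∈ H1, φ x = h) ∧ (∀ x ∈ H2, φ x = -h) ∧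
  {x : UI | 0 < φ x} ⊆ nbhd H1 w ∧ {x : UI | φ x < 0} ⊆ nbhd H2 w

/-- The shifted sequence `n^k`. -/
def shiftSeq (n : ℕ → ℕ) (k : ℕ) : ℕ → ℕ := fun j => n (j + k)

/-- The index set `A_j^m(n) = [n_j] ∪ ⋃_{i=j}^{m-1} {n_i+1, …, n_i+j-1}`. -/
def Aset (n : ℕ → ℕ) (j m : ℕ) : Set ℕ :=
  Set.Icc 1 (n j) ∪ ⋃ i ∈ Set.Ico j m, Set.Icc (n i + 1) (n i + (j - 1))

/-- `n ∈ Z`: sequence of positive integers with `n_{j+1} ≥ n_j + j`. -/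
def memZ (n : ℕ → ℕ) : Prop := ∀ j, 1 ≤ j → 1 ≤ n j ∧ n j + j ≤ n (j + 1)

/-- `δ ∈ Y`: strictly decreasing sequence in `(0,1)` tending to `0`. -/
def memY (δ : ℕ → ℝ) : Prop :=
  (∀ j, 1 ≤ j → 0 < δ j ∧ δ j < 1) ∧ (∀ j, 1 ≤ j → δ (j + 1) < δ j) ∧
    Filter.Tendsto δ Filter.atTop (𝓝 0)

/-- `a ∈ X`: strictly increasing sequence of positive reals tending to `∞`. -/
def memX (a : ℕ → ℝ) : Prop :=
  (∀ j, 1 ≤ j → 0 < a j) ∧ (∀ j, 1 ≤ j → a j < a (j + 1)) ∧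
    Filter.Tendsto a Filter.atTop Filter.atTop

/-- `K ∈ 𝒮_k(n,δ)`. -/
def memS (K : ℕ → KSp) (n : ℕ → ℕ) (δ : ℕ → ℝ) (k : ℕ) : Prop :=
  ∀ j m, 2 ≤ j → j + 1 ≤ m →
    (⋃ i ∈ Aset (shiftSeq n k) j m \ Aset (shiftSeq n k) j (m - 1), (K i : Set UI))
      ⊆ ⋃ i ∈ Aset (shiftSeq n k) (j - 1) (m - 1), nbhd (K i : Set UI) (δ m)

/-- `(K, f, n, δ, a, b) ∈ 𝒴_k`. -/
def memYk (K : ℕ → KSp) (f : C(UI, ℝ)) (n : ℕ → ℕ) (δ : ℕ → ℝ) (a b : ℕ → ℝ)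
    (k : ℕ) : Prop :=
  memZ n ∧ memY δ ∧ memX a ∧ memX b ∧ memS K n δ k ∧
  ∀ j m, 1 ≤ j → j ≤ m →
    NN ⇑f (a j) ⊆ (⋃ i ∈ Aset (shiftSeq n k) j m, nbhd (K i : Set UI) (δ m)) ∧
    (⋃ i ∈ Aset n j m, (K i : Set UI)) ⊆ nbhd (NN ⇑f (b j)) (δ m)

/-- `(K, f) ∈ 𝒳`: the projection of `𝒴 = ⋃_k 𝒴_k` to `𝒦^ℕ × C(I)`. -/
def memXcal (K : ℕ → KSp) (f : C(UI, ℝ)) : Prop :=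
  ∃ n δ a b k, memYk K f n δ a b k

open unitInterval

/-- `N⁺(f,a) ∪ N₊(f,a)`, see `NplusLow_eq_NplusUp_neg`. -/
def NRight (f : UI → ℝ) (a : ℝ) : Set UI := NplusUp f a ∪ NplusUp (-f) a

section Symmetry

variable (f : UI → ℝ) (a : ℝ)

lemma NplusLow_eq_NplusUp_neg : NplusLow f a = NplusUp (-f) a := by
  ext x
  simp only [NplusLow, NplusUp, mem_ofPred_eq, Pi.neg_apply]
  refine and_congr_right fun _ => forall₃_congr fun y _ _ => ?_
  constructor <;> intro <;> linarith

lemma NminusLow_eq_preimage_symm : NminusLow f a = σ ⁻¹' NplusUp (f ∘ σ) a := by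
  ext x
  simp only [NminusLow, NplusUp, mem_preimage, mem_ofPred_eq, Function.comp_apply, coe_symm_eq,
    symm_symm]
  refine ⟨fun ⟨hx, h⟩ => ⟨by linarith, fun y hy hy' => ?_⟩,
    fun ⟨hx, h⟩ => ⟨by linarith, fun y hy hy' => ?_⟩⟩
  · have := h (σ y) (by rw [coe_symm_eq]; linarith) (by rw [coe_symm_eq]; linarith)
    rw [coe_symm_eq] at this
    linarith
  · have := h (σ y) (by rw [coe_symm_eq]; linarith) (by rw [coe_symm_eq]; linarith)
    rw [coe_symm_eq, symm_symm] at this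
    linarith

lemma NminusUp_eq_NminusLow_neg : NminusUp f a = NminusLow (-f) a := by
  ext x
  simp only [NminusUp, NminusLow, mem_ofPred_eq, Pi.neg_apply]
  refine and_congr_right fun _ => forall₃_congr fun y _ _ => ?_
  constructor <;> intro <;> linarith

lemma NN_eq_NRight_union : NN f a = NRight f a ∪ σ ⁻¹' NRight (f ∘ σ) a := by
  rw [NN, Nhat, Ncheck, NplusLow_eq_NplusUp_neg, NminusUp_eq_NminusLow_neg,
    NminusLow_eq_preimage_symm, NminusLow_eq_preimage_symm, NRight, NRight, preimage_union]
  rw [show -f ∘ σ = -(f ∘ σ) from rfl]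
  ext x; simp only [mem_union]; tauto

end Symmetry

lemma isClosed_setOf_mem_NplusUp (a : ℝ) :
    IsClosed {p : C(UI, ℝ) × UI | p.2 ∈ NplusUp p.1 a} := by
  set w : ℝ := 2 ^ (-a)
  have hw : 0 < w := by positivity
  -- `t ↦ y t x` parametrises the window `[x, x + w]` by `t ∈ [0, 1]`
  let y : ℝ → UI → UI := fun t x => projIcc 0 1 zero_le_one (x + t * w)
  have hy : ∀ t x, ((y t x : UI) : ℝ) = max 0 (min 1 (x + t * w)) := fun t x => coe_projIcc ..
  have heq : {p : C(UI, ℝ) × UI | p.2 ∈ NplusUp p.1 a} =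
      {p | (p.2 : ℝ) ≤ 1 - w} ∩
        ⋂ t ∈ Icc (0:ℝ) 1, {p | p.1 (y t p.2) - p.1 p.2 ≤ a * ((y t p.2 : ℝ) - p.2)} := by
    ext ⟨f, x⟩
    simp only [NplusUp, mem_ofPred_eq, mem_inter_iff, mem_iInter]
    refine and_congr_right fun _ => ⟨fun h t ht => h _ ?_ ?_, fun h z hxz hzx => ?_⟩
    · rw [hy]; exact le_max_of_le_right (le_min x.2.2 (by nlinarith [ht.1]))
    · rw [hy]; exact max_le (by linarith [x.2.1]) (min_le_of_right_le (by nlinarith [ht.2]))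
    · have hz : y ((z - x) / w) x = z := by
        simp only [y, div_mul_cancel₀ _ hw.ne', add_sub_cancel, projIcc_val]
      simpa only [hz] using h ((z - x) / w)
        ⟨div_nonneg (sub_nonneg.2 hxz) hw.le, (div_le_one hw).2 (by linarith)⟩
  rw [heq]
  refine (isClosed_le (by fun_prop) continuous_const).inter
    (isClosed_biInter fun t _ => isClosed_le ?_ ?_) <;> fun_prop

lemma isClosed_setOf_mem_NRight (a : ℝ) :
    IsClosed {p : C(UI, ℝ) × UI | p.2 ∈ NRight p.1 a} :=
  (isClosed_setOf_mem_NplusUp a).union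
    ((isClosed_setOf_mem_NplusUp a).preimage (continuous_neg.prodMap continuous_id))

lemma isClosed_setOf_mem_NN (a : ℝ) :
    IsClosed {p : C(UI, ℝ) × UI | p.2 ∈ NN p.1 a} := by
  simp only [NN_eq_NRight_union]
  exact (isClosed_setOf_mem_NRight a).union ((isClosed_setOf_mem_NRight a).preimage
    ((ContinuousMap.continuous_precomp ⟨σ, continuous_symm⟩).prodMap continuous_symm))

lemma isOpen_setOf_forall_mem_of_isClosed {X K : Type*} [TopologicalSpace X]
    [TopologicalSpace K] [CompactSpace K] {Z : Set (X × K)} (hZ : IsClosed Z) {U : Set K}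
    (hU : IsOpen U) : IsOpen {x | ∀ k, (x, k) ∈ Z → k ∈ U} := by
  have : {x | ∀ k, (x, k) ∈ Z → k ∈ U}ᶜ = Prod.fst '' (Z ∩ univ ×ˢ Uᶜ) := by
    ext x; simp [not_forall]
  rw [← isClosed_compl_iff, this]
  exact isClosedMap_fst_of_compactSpace _ (hZ.inter (isClosed_univ.prod hU.isClosed_compl))

lemma isOpen_setOf_volume_NN_lt (a : ℝ) (ε : ENNReal) :
    IsOpen {f : C(UI, ℝ) | volume (Subtype.val '' NN f a) < ε} := by
  refine isOpen_iff_forall_mem_open.2 fun f hf => ?_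
  obtain ⟨U, hNU, hU, hUε⟩ := Set.exists_isOpen_lt_of_lt _ _ hf
  refine ⟨{g | ∀ x, (g, x) ∈ {p : C(UI, ℝ) × UI | p.2 ∈ NN p.1 a} → x ∈ Subtype.val ⁻¹' U},
    fun g hg => (measure_mono ?_).trans_lt hUε,
    isOpen_setOf_forall_mem_of_isClosed (isClosed_setOf_mem_NN a)
      (hU.preimage continuous_subtype_val),
    fun x hx => hNU (mem_image_of_mem _ hx)⟩
  rintro _ ⟨x, hx, rfl⟩
  exact hg x hx

/-- Twice the distance to `ℤ`; defined on the circle so that continuity is free. -/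
def tent (u : ℝ) : ℝ := 2 * ‖(u : UnitAddCircle)‖

@[fun_prop]
lemma continuous_tent : Continuous tent := by unfold tent; fun_prop

lemma tent_eq (u : ℝ) : tent u = 2 * |u - round u| := by rw [tent, UnitAddCircle.norm_eq]

lemma tent_nonneg (u : ℝ) : 0 ≤ tent u := by unfold tent; positivity

lemma tent_le_one (u : ℝ) : tent u ≤ 1 := by
  rw [tent_eq]; linarith [abs_sub_round u]

lemma tent_intCast (k : ℤ) : tent k = 0 := by simp [tent_eq]

lemma tent_intCast_add_half (k : ℤ) : tent (k + 1/2) = 1 := by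
  rw [tent_eq, round_intCast_add]
  norm_num [round_eq, abs_of_neg]

lemma tent_natCast_sub (n : ℕ) (u : ℝ) : tent (n - u) = tent u := by
  have hn : ((n : ℝ) : UnitAddCircle) = 0 := (AddCircle.coe_eq_zero_iff 1).2 ⟨n, by simp⟩
  rw [tent, tent, AddCircle.coe_sub, hn, zero_sub, norm_neg]

lemma tent_natCast_mul_symm (N : ℕ) (x : UI) : tent (N * (σ x : ℝ)) = tent (N * x) := by
  rw [coe_symm_eq, mul_sub, mul_one, tent_natCast_sub]

lemma exists_tent_eq_zero (u : ℝ) : ∃ v, u ≤ v ∧ v ≤ u + 1 ∧ tent v = 0 :=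
  ⟨⌈u⌉, Int.le_ceil u, (Int.ceil_lt_add_one u).le, tent_intCast _⟩

lemma exists_tent_eq_one (u : ℝ) : ∃ v, u ≤ v ∧ v ≤ u + 1 ∧ tent v = 1 :=
  ⟨⌈u - 1/2⌉ + 1/2, by linarith [Int.le_ceil (u - 1/2)],
    by linarith [Int.ceil_lt_add_one (u - 1/2)], tent_intCast_add_half _⟩

lemma exists_abs_two_mul_sub_intCast_le {u s : ℝ} (h : tent u ≤ s ∨ 1 - s ≤ tent u) :
    ∃ m : ℤ, |2 * u - m| ≤ s := by
  rw [tent_eq] at h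
  have hr := abs_sub_round u
  rcases h with h | h
  · exact ⟨2 * round u, by push_cast; rw [← mul_sub, abs_mul]; norm_num; linarith⟩
  · rcases le_total 0 (u - round u) with hu | hu
    · refine ⟨2 * round u + 1, ?_⟩
      rw [abs_of_nonneg hu] at h hr
      push_cast; rw [abs_le]; constructor <;> linarith
    · refine ⟨2 * round u - 1, ?_⟩
      rw [abs_of_nonpos hu] at h hr
      push_cast; rw [abs_le]; constructor <;> linarith

lemma exists_tent_eq_near {N : ℕ} (hN : 0 < N) {x : UI} (hx : (x : ℝ) + 1 / N ≤ 1) {b : ℝ}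
    (hb : ∀ u, ∃ v, u ≤ v ∧ v ≤ u + 1 ∧ tent v = b) :
    ∃ y : UI, (x : ℝ) ≤ y ∧ (y : ℝ) ≤ x + 1 / N ∧ tent (N * y) = b := by
  have hN' : (0 : ℝ) < N := Nat.cast_pos.2 hN
  obtain ⟨v, hxv, hvx, hv⟩ := hb (N * x)
  have h1 : (x : ℝ) ≤ v / N := (le_div_iff₀' hN').2 hxv
  have h2 : v / N ≤ x + 1 / N := by
    rw [div_le_iff₀' hN']; rw [mul_add, mul_one_div_cancel hN'.ne']; exact hvx
  refine ⟨⟨v / N, le_trans x.2.1 h1, h2.trans hx⟩, h1, h2, ?_⟩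
  simpa only [mul_div_cancel₀ _ hN'.ne'] using hv

section Perturbation

variable {f ψ : UI → ℝ} {a ω : ℝ} {N : ℕ}

lemma sub_le_of_mem_NplusUp_add (ha : 0 ≤ a) (hNa : (1 : ℝ) / N ≤ 2 ^ (-a))
    (hf : ∀ u v : UI, |(u : ℝ) - v| ≤ 1 / N → |f u - f v| ≤ ω) {x y : UI}
    (hx : x ∈ NplusUp (f + ψ) a) (hxy : (x : ℝ) ≤ y) (hyx : (y : ℝ) ≤ x + 1 / N) :
    ψ y - ψ x ≤ a / N + ω := by
  have hslope := hx.2 y hxy (hyx.trans (by linarith))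
  have hfxy := abs_le.1 (hf x y (by rw [abs_le]; constructor <;> linarith))
  have : a * ((y : ℝ) - x) ≤ a / N := by
    rw [div_eq_mul_one_div]; exact mul_le_mul_of_nonneg_left (by linarith) ha
  simp only [Pi.add_apply] at hslope
  linarith

lemma tent_extreme_of_mem_NRight (hN : 0 < N) (ha : 0 ≤ a) (hNa : (1 : ℝ) / N ≤ 2 ^ (-a))
    (hf : ∀ u v : UI, |(u : ℝ) - v| ≤ 1 / N → |f u - f v| ≤ ω) {h : ℝ} (hh : 0 < h) {x : UI}
    (hx : x ∈ NRight (f + fun y : UI => h * tent (N * y)) a) :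
    tent (N * x) ≤ (a / N + ω) / h ∨ 1 - (a / N + ω) / h ≤ tent (N * x) := by
  have hx1 : (x : ℝ) + 1 / N ≤ 1 := by
    rcases hx with hx | hx <;> linarith [hx.1]
  rcases hx with hx | hx
  · obtain ⟨y, hxy, hyx, hy⟩ := exists_tent_eq_near hN hx1 exists_tent_eq_one
    have := sub_le_of_mem_NplusUp_add ha hNa hf hx hxy hyx
    rw [hy] at this
    exact Or.inr (sub_le_comm.1 ((le_div_iff₀ hh).2 (by linarith)))
  · rw [neg_add] at hx
    have hf' : ∀ u v : UI, |(u : ℝ) - v| ≤ 1 / N → |(-f) u - (-f) v| ≤ ω := fun u v huv => by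
      simpa only [Pi.neg_apply, neg_sub_neg, abs_sub_comm] using hf u v huv
    obtain ⟨y, hxy, hyx, hy⟩ := exists_tent_eq_near hN hx1 exists_tent_eq_zero
    have := sub_le_of_mem_NplusUp_add ha hNa hf' hx hxy hyx
    simp only [Pi.neg_apply, hy] at this
    exact Or.inl ((le_div_iff₀ hh).2 (by linarith))

end Perturbation

lemma volume_tent_extreme_le {N : ℕ} (hN : 0 < N) {s : ℝ} (hs0 : 0 ≤ s) (hs1 : s < 1) :
    volume {x : ℝ | x ∈ Icc 0 1 ∧ (tent (N * x) ≤ s ∨ 1 - s ≤ tent (N * x))} ≤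
      ENNReal.ofReal (3 * s) := by
  have hN' : (0 : ℝ) < N := Nat.cast_pos.2 hN
  have hcover : {x : ℝ | x ∈ Icc 0 1 ∧ (tent (N * x) ≤ s ∨ 1 - s ≤ tent (N * x))} ⊆
      ⋃ m ∈ Finset.range (2 * N + 1), Icc ((m - s) / (2 * N)) ((m + s) / (2 * N)) := by
    rintro x ⟨⟨hx0, hx1⟩, hx⟩
    obtain ⟨m, hm⟩ := exists_abs_two_mul_sub_intCast_le hx
    rw [abs_le] at hm
    have hNx : (N : ℝ) * x ≤ N := by nlinarith
    have hm0 : (-1 : ℝ) < m := by nlinarith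
    have hmN : (m : ℝ) < 2 * N + 1 := by linarith
    lift m to ℕ using (by exact_mod_cast (show (-1 : ℤ) < m by exact_mod_cast hm0))
    refine mem_biUnion (Finset.mem_range.2 (by exact_mod_cast hmN)) ⟨?_, ?_⟩
    · rw [div_le_iff₀ (by positivity)]; push_cast at hm; linarith
    · rw [le_div_iff₀ (by positivity)]; push_cast at hm; linarith
  calc _ ≤ _ := measure_mono hcover
    _ ≤ ∑ m ∈ Finset.range (2 * N + 1), volume (Icc ((m - s) / (2 * N)) ((m + s) / (2 * N))) :=
        measure_biUnion_finset_le _ _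
    _ = ENNReal.ofReal ((2 * N + 1) * (s / N)) := by
        have hlen : ∀ m : ℕ, (m + s) / (2 * N) - (m - s) / (2 * N) = s / N := fun m => by
          field_simp; ring
        simp only [Real.volume_Icc, hlen, Finset.sum_const, Finset.card_range, nsmul_eq_mul]
        rw [ENNReal.ofReal_mul (by positivity)]
        norm_cast
    _ ≤ ENNReal.ofReal (3 * s) := by
        refine ENNReal.ofReal_le_ofReal ?_
        rw [← mul_div_assoc, div_le_iff₀ hN']
        nlinarith [show (1 : ℝ) ≤ N from Nat.one_le_cast.2 hN]

lemma dense_setOf_volume_NN_lt {a : ℝ} (ha : 0 ≤ a) {ε : ℝ} (hε : 0 < ε) (hε1 : ε ≤ 1) :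
    Dense {f : C(UI, ℝ) | volume (Subtype.val '' NN f a) < ENNReal.ofReal ε} := by
  refine Metric.dense_iff.2 fun f r hr => ?_
  set h := r / 2
  have hh : 0 < h := half_pos hr
  set ω := h * ε / 12
  obtain ⟨δ, hδ, hfδ⟩ := Metric.uniformContinuous_iff.1
    (CompactSpace.uniformContinuous_of_continuous f.continuous) ω (by positivity)
  obtain ⟨N, hN⟩ := exists_nat_gt (max (1 / δ) (max (2 ^ a) (12 * a / (h * ε))))
  simp only [max_lt_iff] at hN
  obtain ⟨hNδ, hNa, hNε⟩ := hN
  have hN0 : (0 : ℝ) < N := (one_div_pos.2 hδ).trans hNδ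
  have hNpos : 0 < N := Nat.cast_pos.1 hN0
  have hw : (1 : ℝ) / N ≤ 2 ^ (-a) := by
    rw [Real.rpow_neg zero_le_two, ← one_div]
    exact one_div_le_one_div_of_le (by positivity) hNa.le
  have haN : a / N ≤ h * ε / 12 := by
    rw [div_le_iff₀ hN0]; rw [div_lt_iff₀ (by positivity)] at hNε; linarith
  have hf : ∀ u v : UI, |(u : ℝ) - v| ≤ 1 / N → |f u - f v| ≤ ω := fun u v huv => by
    have huv' : dist u v < δ := by
      rw [Subtype.dist_eq, Real.dist_eq]; exact huv.trans_lt ((one_div_lt hN0 hδ).2 hNδ)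
    exact (Real.dist_eq _ _ ▸ hfδ huv').le
  have hfσ : ∀ u v : UI, |(u : ℝ) - v| ≤ 1 / N → |(f ∘ σ) u - (f ∘ σ) v| ≤ ω := fun u v huv =>
    hf (σ u) (σ v) (by rwa [coe_symm_eq, coe_symm_eq, sub_sub_sub_cancel_left, abs_sub_comm])
  let φ : C(UI, ℝ) := ⟨fun y => h * tent (N * y), by fun_prop⟩
  refine ⟨f + φ, ?_, ?_⟩
  · rw [Metric.mem_ball, dist_eq_norm, add_sub_cancel_left]
    refine lt_of_le_of_lt ((ContinuousMap.norm_le _ hh.le).2 fun y => ?_) (half_lt_self hr)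
    rw [Real.norm_eq_abs, abs_le]
    have := tent_nonneg (N * y)
    have := tent_le_one (N * y)
    have hφ : φ y = h * tent (N * y) := rfl
    constructor <;> nlinarith
  set s := (a / N + ω) / h
  have hs : s ≤ ε / 6 := by
    rw [div_le_iff₀ hh]; linarith [show ω = h * ε / 12 from rfl]
  have hsub : Subtype.val '' NN ⇑(f + φ) a ⊆
      {x : ℝ | x ∈ Icc 0 1 ∧ (tent (N * x) ≤ s ∨ 1 - s ≤ tent (N * x))} := by
    rintro _ ⟨x, hx, rfl⟩
    refine ⟨x.2, ?_⟩
    rw [NN_eq_NRight_union] at hx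
    rcases hx with hx | hx
    · exact tent_extreme_of_mem_NRight hNpos ha hw hf hh hx
    · have hφσ : ⇑(f + φ) ∘ σ = ⇑f ∘ σ + fun y : UI => h * tent (N * y) := funext fun y => by
        simp only [Function.comp_apply, ContinuousMap.coe_add, Pi.add_apply, φ,
          ContinuousMap.coe_mk, tent_natCast_mul_symm]
      rw [mem_preimage, hφσ] at hx
      simpa only [tent_natCast_mul_symm] using
        tent_extreme_of_mem_NRight hNpos ha hw hfσ hh hx
  calc volume _ ≤ _ := measure_mono hsub
    _ ≤ ENNReal.ofReal (3 * s) := volume_tent_extreme_le hNpos (by positivity) (by linarith)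
    _ < ENNReal.ofReal ε := (ENNReal.ofReal_lt_ofReal_iff hε).2 (by linarith)

lemma exists_eventually_lt_of_limsup_ne_top {α : Type*} {l : Filter α} {q : α → ℝ}
    (h : limsup (fun y => (q y : EReal)) l ≠ ⊤) : ∃ c : ℝ, ∀ᶠ y in l, q y < c := by
  obtain ⟨c, hc, -⟩ := EReal.lt_iff_exists_real_btwn.1 h.lt_top
  exact ⟨c, (eventually_lt_of_limsup_lt hc).mono fun y hy => EReal.coe_lt_coe_iff.1 hy⟩

lemma exists_eventually_gt_of_liminf_ne_bot {α : Type*} {l : Filter α} {q : α → ℝ}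
    (h : liminf (fun y => (q y : EReal)) l ≠ ⊥) : ∃ c : ℝ, ∀ᶠ y in l, c < q y := by
  obtain ⟨c, -, hc⟩ := EReal.lt_iff_exists_real_btwn.1 h.bot_lt
  exact ⟨c, (eventually_lt_of_lt_liminf hc).mono fun y hy => EReal.coe_lt_coe_iff.1 hy⟩

lemma eventually_two_rpow_neg_lt {r : ℝ} (hr : 0 < r) :
    ∀ᶠ m : ℕ in atTop, (2:ℝ) ^ (-(m:ℝ)) < r := by
  have : Tendsto (fun m : ℕ => ((2:ℝ) ^ m)⁻¹) atTop (𝓝 0) :=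
    tendsto_inv_atTop_zero.comp (tendsto_pow_atTop_atTop_of_one_lt one_lt_two)
  filter_upwards [this.eventually (gt_mem_nhds hr)] with m hm
  rwa [Real.rpow_neg zero_le_two, Real.rpow_natCast]

section Dini

variable {f : UI → ℝ} {x : UI}

lemma exists_eventually_le_of_DiniSupR_ne_top (h : DiniSupR f x ≠ ⊤) :
    ∃ c : ℝ, ∀ᶠ y in 𝓝[>] x, f y - f x ≤ c * (y - x) := by
  obtain ⟨c, hc⟩ := exists_eventually_lt_of_limsup_ne_top h
  refine ⟨c, ?_⟩
  filter_upwards [hc, self_mem_nhdsWithin] with y hy (hxy : x < y)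
  exact ((div_lt_iff₀ (sub_pos.2 (Subtype.coe_lt_coe.2 hxy))).1 hy).le

lemma exists_eventually_le_of_DiniInfR_ne_bot (h : DiniInfR f x ≠ ⊥) :
    ∃ c : ℝ, ∀ᶠ y in 𝓝[>] x, c * (y - x) ≤ f y - f x := by
  obtain ⟨c, hc⟩ := exists_eventually_gt_of_liminf_ne_bot h
  refine ⟨c, ?_⟩
  filter_upwards [hc, self_mem_nhdsWithin] with y hy (hxy : x < y)
  exact ((lt_div_iff₀ (sub_pos.2 (Subtype.coe_lt_coe.2 hxy))).1 hy).le

lemma exists_eventually_le_of_DiniSupL_ne_top (h : DiniSupL f x ≠ ⊤) :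
    ∃ c : ℝ, ∀ᶠ y in 𝓝[<] x, c * (y - x) ≤ f y - f x := by
  obtain ⟨c, hc⟩ := exists_eventually_lt_of_limsup_ne_top h
  refine ⟨c, ?_⟩
  filter_upwards [hc, self_mem_nhdsWithin] with y hy (hyx : y < x)
  exact ((div_lt_iff_of_neg (sub_neg.2 (Subtype.coe_lt_coe.2 hyx))).1 hy).le

lemma exists_eventually_le_of_DiniInfL_ne_bot (h : DiniInfL f x ≠ ⊥) :
    ∃ c : ℝ, ∀ᶠ y in 𝓝[<] x, f y - f x ≤ c * (y - x) := by
  obtain ⟨c, hc⟩ := exists_eventually_gt_of_liminf_ne_bot h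
  refine ⟨c, ?_⟩
  filter_upwards [hc, self_mem_nhdsWithin] with y hy (hyx : y < x)
  exact ((lt_div_iff_of_neg (sub_neg.2 (Subtype.coe_lt_coe.2 hyx))).1 hy).le

lemma exists_mem_NplusUp_of_eventually_le {c : ℝ} (hx : (x : ℝ) < 1)
    (h : ∀ᶠ y in 𝓝[>] x, f y - f x ≤ c * (y - x)) : ∃ m : ℕ, x ∈ NplusUp f m := by
  obtain ⟨ρ, hρ, hball⟩ := Metric.eventually_nhds_iff.1 (eventually_nhdsWithin_iff.1 h)
  obtain ⟨m, hcm, hmρ, hmx⟩ := ((tendsto_natCast_atTop_atTop.eventually_ge_atTop c).and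
    ((eventually_two_rpow_neg_lt hρ).and (eventually_two_rpow_neg_lt (sub_pos.2 hx)))).exists
  refine ⟨m, by linarith, fun y hxy hyx => ?_⟩
  rcases hxy.eq_or_lt with hxy | hxy
  · simp [Subtype.ext hxy]
  · have hdist : dist y x < ρ := by
      rw [Subtype.dist_eq, Real.dist_eq, abs_of_pos (sub_pos.2 hxy)]; linarith
    have := hball hdist (Subtype.coe_lt_coe.1 hxy)
    nlinarith

lemma eventually_nhdsGT_symm {P : UI → Prop} (h : ∀ᶠ y in 𝓝[<] x, P y) :
    ∀ᶠ y in 𝓝[>] σ x, P (σ y) := by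
  have hσ : Tendsto σ (𝓝[>] σ x) (𝓝[<] x) := by
    refine tendsto_nhdsWithin_iff.2 ⟨?_, eventually_nhdsWithin_of_forall fun y hy => ?_⟩
    · exact (continuous_symm.tendsto' (σ x) x (symm_symm x)).mono_left nhdsWithin_le_nhds
    · have : 1 - (x : ℝ) < y := by rw [← coe_symm_eq]; exact hy
      show ((σ y : UI) : ℝ) < x
      rw [coe_symm_eq]; linarith
  exact hσ.eventually h

lemma exists_mem_NN_of_not_knot (hx0 : 0 < (x : ℝ)) (hx1 : (x : ℝ) < 1)
    (h : ¬ (DiniSupR f x = ⊤ ∧ DiniSupL f x = ⊤ ∧ DiniInfR f x = ⊥ ∧ DiniInfL f x = ⊥)) :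
    ∃ m : ℕ, x ∈ NN f m := by
  have hσx : ((σ x : UI) : ℝ) < 1 := by rw [coe_symm_eq]; linarith
  simp only [NN_eq_NRight_union, NRight, mem_union, mem_preimage]
  simp only [not_and_or] at h
  rcases h with h | h | h | h
  · obtain ⟨c, hc⟩ := exists_eventually_le_of_DiniSupR_ne_top h
    obtain ⟨m, hm⟩ := exists_mem_NplusUp_of_eventually_le hx1 hc
    exact ⟨m, .inl (.inl hm)⟩
  · obtain ⟨c, hc⟩ := exists_eventually_le_of_DiniSupL_ne_top h
    obtain ⟨m, hm⟩ := exists_mem_NplusUp_of_eventually_le (f := -(f ∘ σ)) (c := c) hσx <|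
      (eventually_nhdsGT_symm hc).mono fun y hy => by
        simp only [Pi.neg_apply, Function.comp_apply, symm_symm, coe_symm_eq] at hy ⊢
        linarith
    exact ⟨m, .inr (.inr hm)⟩
  · obtain ⟨c, hc⟩ := exists_eventually_le_of_DiniInfR_ne_bot h
    obtain ⟨m, hm⟩ := exists_mem_NplusUp_of_eventually_le (f := -f) (c := -c) hx1 <|
      hc.mono fun y hy => by simp only [Pi.neg_apply]; linarith
    exact ⟨m, .inl (.inr hm)⟩
  · obtain ⟨c, hc⟩ := exists_eventually_le_of_DiniInfL_ne_bot h
    obtain ⟨m, hm⟩ := exists_mem_NplusUp_of_eventually_le (f := f ∘ σ) (c := -c) hσx <|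
      (eventually_nhdsGT_symm hc).mono fun y hy => by
        simp only [Function.comp_apply, symm_symm, coe_symm_eq] at hy ⊢
        linarith
    exact ⟨m, .inr (.inl hm)⟩

end Dini

lemma ENNReal.eq_zero_of_forall_lt_ofReal_one_div_succ {x : ENNReal}
    (h : ∀ k : ℕ, x < ENNReal.ofReal (1 / (k + 1))) : x = 0 :=
  nonpos_iff_eq_zero.1 <| ge_of_tendsto' (by
    simpa using ENNReal.tendsto_ofReal tendsto_one_div_add_atTop_nhds_zero_nat) fun k => (h k).le

/-- **Jarník's theorem.** A typical `f ∈ C(I)` satisfies `D⁺f(x) = D⁻f(x) = ∞` and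
`D₊f(x) = D₋f(x) = −∞` for Lebesgue-almost every `x ∈ (0,1)`. -/
theorem jarnik_typical_knot_ae :
    {f : C(UI, ℝ) | ∀ᵐ x : ℝ ∂volume, ∀ hx : x ∈ Set.Ioo (0:ℝ) 1,
        DiniSupR ⇑f ⟨x, hx.1.le, hx.2.le⟩ = ⊤ ∧ DiniSupL ⇑f ⟨x, hx.1.le, hx.2.le⟩ = ⊤ ∧
        DiniInfR ⇑f ⟨x, hx.1.le, hx.2.le⟩ = ⊥ ∧ DiniInfL ⇑f ⟨x, hx.1.le, hx.2.le⟩ = ⊥}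
      ∈ residual C(UI, ℝ) := by
  have hres : (⋂ (m : ℕ) (k : ℕ), {f : C(UI, ℝ) |
      volume (Subtype.val '' NN f m) < ENNReal.ofReal (1 / (k + 1))}) ∈ residual C(UI, ℝ) :=
    countable_iInter_mem.2 fun m => countable_iInter_mem.2 fun k =>
      residual_of_dense_open (isOpen_setOf_volume_NN_lt _ _)
        (dense_setOf_volume_NN_lt m.cast_nonneg Nat.one_div_pos_of_nat
          (div_le_one_of_le₀ (by linarith [k.cast_nonneg (α := ℝ)]) (by positivity)))
  refine mem_of_superset hres fun f hf => ?_
  simp only [mem_iInter, mem_ofPred_eq] at hf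
  have hnull (m : ℕ) : volume (Subtype.val '' NN f m) = 0 :=
    ENNReal.eq_zero_of_forall_lt_ofReal_one_div_succ (hf m)
  refine measure_mono_null (fun x hx => ?_) (measure_iUnion_null hnull)
  simp only [mem_compl_iff, mem_ofPred_eq, not_forall] at hx
  obtain ⟨hx, hbad⟩ := hx
  obtain ⟨m, hm⟩ := exists_mem_NN_of_not_knot hx.1 hx.2 hbad
  exact mem_iUnion.2 ⟨m, _, hm, rfl⟩

end
end

section
/- Suppose 0 < a < b and ε > 0. Then there exists δ > 0 such that whenever f, g ∈ C(I) satisfy ‖f − g‖ < δ (supremum norm), one has N̂(f,a) ⊂ B(N̂(g,b), ε), Ň(f,a) ⊂ B(Ň(g,b), ε), and N(f,a) ⊂ B(N(g,b), ε). -/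
open Filter Topology TopologicalSpace Set MeasureTheory

noncomputable section

/-! Given `x ∈ N⁺(f,a)`, a maximiser `x'` of `g(y) - b y` on `[x, x + η]` lies in
`N⁺(g,b)`: below `x + η` this is maximality, and beyond `x + η` the slope `a` of `f` plus the
error `2‖f - g‖ ≤ (b - a) η` stays under the slope `b`, so `g(y) - b y ≤ g(x) - b x`. The
condition `η ≤ 2^{-a} - 2^{-b}` keeps the window `[x', x' + 2^{-b}]` inside `[x, x + 2^{-a}]`.
The other three sets reduce to `N⁺` by negating `f` and reflecting `I` through `1/2`. -/

open unitInterval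

section

variable {f g : UI → ℝ} {a b η ε : ℝ}

lemma exists_mem_NplusUp_near (hg : Continuous g) (hab : a ≤ b) (hη : 0 ≤ η)
    (hηab : η ≤ 2 ^ (-a) - 2 ^ (-b)) (hfg : ∀ y, |f y - g y| ≤ (b - a) * η / 2)
    {x : UI} (hx : x ∈ NplusUp f a) :
    ∃ x' ∈ NplusUp g b, (x : ℝ) ≤ x' ∧ (x' : ℝ) ≤ x + η := by
  obtain ⟨hx1, hfx⟩ := hx
  have hS : IsCompact (Subtype.val ⁻¹' Icc (x : ℝ) (x + η) : Set UI) :=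
    (isClosed_Icc.preimage continuous_subtype_val).isCompact
  obtain ⟨x', ⟨hxx', hx'η⟩, hmax⟩ := hS.exists_isMaxOn ⟨x, le_rfl, by linarith⟩
    (hg.sub (continuous_const.mul continuous_subtype_val)).continuousOn
  refine ⟨x', ⟨by linarith, fun y hy1 hy2 => ?_⟩, hxx', hx'η⟩
  suffices g y - b * y ≤ g x' - b * x' by linarith
  rcases le_or_gt (y : ℝ) (x + η) with hy | hy
  · exact hmax ⟨by linarith, hy⟩
  · have hx_le_x' : g x - b * x ≤ g x' - b * x' := hmax ⟨le_rfl, by linarith⟩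
    have hfy := hfx y (by linarith) (by linarith)
    have hslack : (b - a) * η ≤ (b - a) * (y - x) :=
      mul_le_mul_of_nonneg_left (by linarith) (by linarith)
    have hy_err := abs_le.1 (hfg y)
    have hx_err := abs_le.1 (hfg x)
    linarith

lemma NplusUp_subset_nbhd (hg : Continuous g) (hab : a ≤ b) (hη : 0 ≤ η)
    (hηab : η ≤ 2 ^ (-a) - 2 ^ (-b)) (hfg : ∀ y, |f y - g y| ≤ (b - a) * η / 2)
    (hηε : η < ε) : NplusUp f a ⊆ nbhd (NplusUp g b) ε := by
  intro x hx
  obtain ⟨x', hx', hxx', hx'η⟩ := exists_mem_NplusUp_near hg hab hη hηab hfg hx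
  refine mem_biUnion hx' ?_
  rw [Metric.mem_ball, Subtype.dist_eq, Real.dist_eq, abs_lt]
  constructor <;> linarith

lemma preimage_symm_NplusUp (f : UI → ℝ) (a : ℝ) :
    σ ⁻¹' NplusUp (f ∘ σ) a = NminusLow f a := by
  ext x
  simp only [mem_preimage, NplusUp, NminusLow, mem_ofPred_eq, coe_symm_eq, Function.comp_apply,
    symm_symm]
  refine and_congr (by constructor <;> intro h <;> linarith)
    ⟨fun h y hy1 hy2 => ?_, fun h y hy1 hy2 => ?_⟩
  · have := h (σ y) (by rw [coe_symm_eq]; linarith) (by rw [coe_symm_eq]; linarith)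
    rw [symm_symm, coe_symm_eq] at this
    linarith
  · have := h (σ y) (by rw [coe_symm_eq]; linarith) (by rw [coe_symm_eq]; linarith)
    rw [coe_symm_eq] at this
    linarith

lemma preimage_symm_nbhd (A : Set UI) (r : ℝ) : σ ⁻¹' nbhd A r = nbhd (σ ⁻¹' A) r := by
  have hdist : ∀ x y : UI, dist (σ x) (σ y) = dist x y := fun x y => by
    rw [Subtype.dist_eq, Subtype.dist_eq, coe_symm_eq, coe_symm_eq, Real.dist_eq, Real.dist_eq,
      ← abs_neg]
    ring_nf
  ext x
  simp only [nbhd, mem_preimage, mem_iUnion, Metric.mem_ball, exists_prop]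
  constructor
  · rintro ⟨y, hy, hxy⟩
    exact ⟨σ y, by rwa [symm_symm], by rwa [← hdist, symm_symm]⟩
  · rintro ⟨y, hy, hxy⟩
    exact ⟨σ y, hy, by rwa [hdist]⟩

lemma NminusLow_subset_nbhd (hg : Continuous g) (hab : a ≤ b) (hη : 0 ≤ η)
    (hηab : η ≤ 2 ^ (-a) - 2 ^ (-b)) (hfg : ∀ y, |f y - g y| ≤ (b - a) * η / 2)
    (hηε : η < ε) : NminusLow f a ⊆ nbhd (NminusLow g b) ε := by
  rw [← preimage_symm_NplusUp, ← preimage_symm_NplusUp, ← preimage_symm_nbhd]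
  exact preimage_mono <|
    NplusUp_subset_nbhd (hg.comp continuous_symm) hab hη hηab (fun y => hfg (σ y)) hηε

lemma Nhat_subset_nbhd (hg : Continuous g) (hab : a ≤ b) (hη : 0 ≤ η)
    (hηab : η ≤ 2 ^ (-a) - 2 ^ (-b)) (hfg : ∀ y, |f y - g y| ≤ (b - a) * η / 2)
    (hηε : η < ε) : Nhat f a ⊆ nbhd (Nhat g b) ε := by
  rw [Nhat, Nhat, nbhd, biUnion_union]
  exact union_subset_union (NplusUp_subset_nbhd hg hab hη hηab hfg hηε)
    (NminusLow_subset_nbhd hg hab hη hηab hfg hηε)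

lemma Ncheck_eq_Nhat_neg (f : UI → ℝ) (a : ℝ) : Ncheck f a = Nhat (-f) a := by
  ext x
  simp only [Ncheck, Nhat, NplusLow, NplusUp, NminusUp, NminusLow, Pi.neg_apply, mem_union,
    mem_ofPred_eq]
  refine or_congr (and_congr_right fun _ => ?_) (and_congr_right fun _ => ?_) <;>
    refine forall₃_congr fun y _ _ => ?_ <;> constructor <;> intro h <;> linarith

lemma Ncheck_subset_nbhd (hg : Continuous g) (hab : a ≤ b) (hη : 0 ≤ η)
    (hηab : η ≤ 2 ^ (-a) - 2 ^ (-b)) (hfg : ∀ y, |f y - g y| ≤ (b - a) * η / 2)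
    (hηε : η < ε) : Ncheck f a ⊆ nbhd (Ncheck g b) ε := by
  rw [Ncheck_eq_Nhat_neg, Ncheck_eq_Nhat_neg]
  refine Nhat_subset_nbhd hg.neg hab hη hηab (fun y => ?_) hηε
  rw [Pi.neg_apply, Pi.neg_apply, neg_sub_neg, abs_sub_comm]
  exact hfg y

end

theorem nbhd_N_continuity_general (a b ε : ℝ) (hab : a < b) (hε : 0 < ε) :
    ∃ δ > 0, ∀ f g : C(UI, ℝ), ‖f - g‖ < δ →
      Nhat ⇑f a ⊆ nbhd (Nhat ⇑g b) ε ∧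
      Ncheck ⇑f a ⊆ nbhd (Ncheck ⇑g b) ε ∧
      NN ⇑f a ⊆ nbhd (NN ⇑g b) ε := by
  set η : ℝ := min (ε / 2) (2 ^ (-a) - 2 ^ (-b))
  have hgap : (2 : ℝ) ^ (-b) < 2 ^ (-a) :=
    Real.rpow_lt_rpow_of_exponent_lt one_lt_two (neg_lt_neg hab)
  have hη : 0 < η := lt_min (half_pos hε) (sub_pos.2 hgap)
  have hηε : η < ε := (min_le_left _ _).trans_lt (half_lt_self hε)
  refine ⟨(b - a) * η / 2, by have := sub_pos.2 hab; positivity, fun f g hfg => ?_⟩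
  have hpt : ∀ y, |f y - g y| ≤ (b - a) * η / 2 := fun y =>
    (ContinuousMap.norm_coe_le_norm (f - g) y).trans hfg.le
  have hhat := Nhat_subset_nbhd g.continuous hab.le hη.le (min_le_right _ _) hpt hηε
  have hcheck := Ncheck_subset_nbhd g.continuous hab.le hη.le (min_le_right _ _) hpt hηε
  refine ⟨hhat, hcheck, ?_⟩
  rw [NN, NN, nbhd, biUnion_union]
  exact union_subset_union hhat hcheck

/-- Continuity of `N(·,·)`: for `0 < a < b` and `ε > 0` there is `δ > 0` such that
`‖f − g‖ < δ` implies `N̂(f,a) ⊆ B(N̂(g,b),ε)`, `Ň(f,a) ⊆ B(Ň(g,b),ε)` and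
`N(f,a) ⊆ B(N(g,b),ε)`. -/
theorem nbhd_N_continuity (a b ε : ℝ) (ha : 0 < a) (hab : a < b) (hε : 0 < ε) :
    ∃ δ > 0, ∀ f g : C(UI, ℝ), ‖f - g‖ < δ →
      Nhat ⇑f a ⊆ nbhd (Nhat ⇑g b) ε ∧
      Ncheck ⇑f a ⊆ nbhd (Ncheck ⇑g b) ε ∧
      NN ⇑f a ⊆ nbhd (NN ⇑g b) ε :=
  nbhd_N_continuity_general a b ε hab hε

end
end

section
/- Suppose f is a continuously differentiable function on I and 0 < a < c < b. Then there exists ε > 0 such that for each x ∈ [0, 1−2^{−a}] \ N⁺(f,b), there exists y ∈ (x+ε, x+2^{−b}] with f(y) − f(x) > c(y − x). -/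
open Filter Topology TopologicalSpace Set MeasureTheory

noncomputable section

/-! Let `x ∉ N⁺(f,b)`, so some `y ∈ (x, x + 2^{-b}]` has slope `(f y - f x)/(y - x) > b`. If `y`
is far from `x` it is the required point. Otherwise the mean value theorem puts a point of
derivative `> b` in `(x, y)`, and uniform continuity of `f'` keeps `f' > c` on a window of fixed
length `η` to the right of `x`; a second application of the mean value theorem then shows that
`z = x + min η 2^{-b}` has slope `> c`. -/

section MeanValue

variable {g : ℝ → ℝ} {p q : ℝ}

theorem ContDiffOn.exists_derivWithin_Icc_eq_slope (hg : ContDiffOn ℝ 1 g (Icc p q))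
    {x y : ℝ} (hx : x ∈ Icc p q) (hy : y ∈ Icc p q) (hxy : x < y) :
    ∃ ξ ∈ Ioo x y, derivWithin g (Icc p q) ξ = (g y - g x) / (y - x) := by
  have hsub : Icc x y ⊆ Icc p q := Icc_subset_Icc hx.1 hy.2
  refine exists_hasDerivAt_eq_slope g _ hxy (hg.continuousOn.mono hsub) fun s hs => ?_
  have hnhds : Icc p q ∈ 𝓝 s :=
    Icc_mem_nhds (hx.1.trans_lt hs.1) (hs.2.trans_le hy.2)
  have hdiff := (hg.differentiableOn one_ne_zero s (hsub (Ioo_subset_Icc_self hs))).differentiableAt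
    hnhds
  rw [derivWithin_of_mem_nhds hnhds]
  exact hdiff.hasDerivAt

theorem ContDiffOn.exists_pos_mul_sub_lt_of_mul_sub_lt (hpq : p < q)
    (hg : ContDiffOn ℝ 1 g (Icc p q)) {b c : ℝ} (hcb : c < b) :
    ∃ η > 0, ∀ x ∈ Icc p q, ∀ y ∈ Icc p q, ∀ z ∈ Icc p q, x < y → x < z →
      y - x ≤ η → z - x ≤ η → b * (y - x) < g y - g x → c * (z - x) < g z - g x := by
  have hφ : UniformContinuousOn (derivWithin g (Icc p q)) (Icc p q) :=
    isCompact_Icc.uniformContinuousOn_of_continuous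
      (hg.continuousOn_derivWithin (uniqueDiffOn_Icc hpq) le_rfl)
  obtain ⟨η, hη, hclose⟩ := Metric.uniformContinuousOn_iff.mp hφ (b - c) (sub_pos.mpr hcb)
  refine ⟨η, hη, fun x hx y hy z hz hxy hxz hyη hzη hslope => ?_⟩
  obtain ⟨ξ, hξ, hξy⟩ := hg.exists_derivWithin_Icc_eq_slope hx hy hxy
  obtain ⟨ζ, hζ, hζz⟩ := hg.exists_derivWithin_Icc_eq_slope hx hz hxz
  have hbξ : b < derivWithin g (Icc p q) ξ := by
    rw [hξy, lt_div_iff₀ (sub_pos.mpr hxy)]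
    exact hslope
  have hξζ : |ζ - ξ| < η := by
    rw [abs_lt]
    constructor <;> linarith [hξ.1, hξ.2, hζ.1, hζ.2]
  have hcζ : c < derivWithin g (Icc p q) ζ := by
    have := hclose ζ (Icc_subset_Icc hx.1 hz.2 (Ioo_subset_Icc_self hζ))
      ξ (Icc_subset_Icc hx.1 hy.2 (Ioo_subset_Icc_self hξ)) (by rwa [Real.dist_eq])
    rw [Real.dist_eq, abs_lt] at this
    linarith [this.1]
  rwa [hζz, lt_div_iff₀ (sub_pos.mpr hxz)] at hcζ

end MeanValue

theorem exists_lt_mul_sub_lt_of_notMem_NplusUp {f : UI → ℝ} {b : ℝ} {x : UI}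
    (hx : (x : ℝ) ≤ 1 - 2 ^ (-b)) (hxN : x ∉ NplusUp f b) :
    ∃ y : UI, (x : ℝ) < y ∧ (y : ℝ) ≤ x + 2 ^ (-b) ∧ b * ((y : ℝ) - x) < f y - f x := by
  simp only [NplusUp, mem_ofPred_eq, not_and, not_forall, not_le] at hxN
  obtain ⟨y, hxy, hyb, hfy⟩ := hxN hx
  refine ⟨y, hxy.lt_of_ne ?_, hyb, hfy⟩
  rintro heq
  rw [Subtype.coe_injective heq] at hfy
  simp at hfy

theorem exists_eps_far_point_of_C1_general (f : UI → ℝ) (hf : IsC1 f) (a c b : ℝ)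
    (hac : a < c) (hcb : c < b) :
    ∃ ε > 0, ∀ x : UI, (x:ℝ) ≤ 1 - 2^(-a) → x ∉ NplusUp f b →
      ∃ y : UI, (x:ℝ) + ε < (y:ℝ) ∧ (y:ℝ) ≤ (x:ℝ) + 2^(-b) ∧
        c * ((y:ℝ) - (x:ℝ)) < f y - f x := by
  obtain ⟨η, hη, hpersist⟩ := hf.exists_pos_mul_sub_lt_of_mul_sub_lt one_pos hcb
  have hpow : (2 : ℝ) ^ (-b) ≤ 2 ^ (-a) :=
    Real.rpow_le_rpow_of_exponent_le one_le_two (by linarith)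
  set δ := min η (2 ^ (-b))
  have hδη : δ ≤ η := min_le_left _ _
  have hδb : δ ≤ 2 ^ (-b) := min_le_right _ _
  have hδ : 0 < δ := lt_min hη (by positivity)
  refine ⟨δ / 2, half_pos hδ, fun x hx hxN => ?_⟩
  obtain ⟨y, hxy, hyb, hfy⟩ := exists_lt_mul_sub_lt_of_notMem_NplusUp (by linarith) hxN
  by_cases hfar : (x : ℝ) + δ / 2 < y
  · exact ⟨y, hfar, hyb, by nlinarith⟩
  let z : UI := ⟨x + δ, by linarith [x.2.1], by linarith⟩
  have hz : (z : ℝ) = x + δ := rfl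
  refine ⟨z, by linarith, by linarith, ?_⟩
  simpa using hpersist x x.2 y y.2 z z.2 hxy (by linarith) (by linarith) (by linarith)
    (by simpa [IsC1] using hfy)

/-- If `f ∈ C¹(I)` and `0 < a < c < b`, then there is `ε > 0` such that for every
`x ∈ [0, 1-2^{-a}] \ N⁺(f,b)` there is `y ∈ (x+ε, x+2^{-b}]` with `f(y)-f(x) > c(y-x)`. -/
theorem exists_eps_far_point_of_C1 (f : UI → ℝ) (hf : IsC1 f) (a c b : ℝ)
    (ha : 0 < a) (hac : a < c) (hcb : c < b) :
    ∃ ε > 0, ∀ x : UI, (x:ℝ) ≤ 1 - 2^(-a) → x ∉ NplusUp f b →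
      ∃ y : UI, (x:ℝ) + ε < (y:ℝ) ∧ (y:ℝ) ≤ (x:ℝ) + 2^(-b) ∧
        c * ((y:ℝ) - (x:ℝ)) < f y - f x :=
  exists_eps_far_point_of_C1_general f hf a c b hac hcb

end
end

section
/- Suppose f is a continuously differentiable function on I and 0 < a < b. Then there exists l > 0 such that each of the following sets contains an open interval of length l: (1) {y ∈ [x, x+2^{−a}] : f(y) − f(x) > a(y−x)} for every x ∈ [0, 1−2^{−a}] \ N⁺(f,b); (2) {y ∈ [x, x+2^{−a}] : f(y) − f(x) < −a(y−x)} for every x ∈ [0, 1−2^{−a}] \ N₊(f,b); (3) {y ∈ [x−2^{−a}, x] : f(y) − f(x) < a(y−x)} for every x ∈ [2^{−a}, 1] \ N⁻(f,b); (4) {y ∈ [x−2^{−a}, x] : f(y) − f(x) > −a(y−x)} for every x ∈ [2^{−a}, 1] \ N₋(f,b). -/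
open Filter Topology TopologicalSpace Set MeasureTheory

noncomputable section

/-! If `x ∉ N⁺(f,b)`, some `y₀ ∈ [x, x + 2^{-b}]` has `f y₀ - f x > b (y₀ - x)`. Let `c` be the
last point of `[x, y₀]` where `f(·) - f x` lies below the line of slope `a`; the mean value
theorem on `[c, y₀]` gives `ξ > c` with `f' ξ > b`. Since `f'` is uniformly continuous, it stays
above `a` on `[ξ, ξ + l]` for an `l` depending only on `f`, `a`, `b`, so `f(·) - f x` stays above
the line there. The three other cases follow by replacing `f` with `-f` and reflecting `I`. -/

open unitInterval

theorem exists_last_nonpos {h : ℝ → ℝ} {x y : ℝ} (hxy : x ≤ y) (hh : ContinuousOn h (Icc x y))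
    (hx : h x ≤ 0) : ∃ c ∈ Icc x y, h c ≤ 0 ∧ ∀ t ∈ Ioc c y, 0 < h t := by
  have hS : IsCompact (Icc x y ∩ h ⁻¹' Iic 0) := isCompact_Icc.of_isClosed_subset
    (hh.preimage_isClosed_of_isClosed isClosed_Icc isClosed_Iic) inter_subset_left
  obtain ⟨c, ⟨hc, hhc⟩, hmax⟩ := hS.exists_isGreatest ⟨x, ⟨left_mem_Icc.2 hxy, hx⟩⟩
  refine ⟨c, hc, hhc, fun t ht => lt_of_not_ge fun hht => ?_⟩
  exact (hmax ⟨⟨hc.1.trans ht.1.le, ht.2⟩, hht⟩).not_gt ht.1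

structure HasSmallDerivOsc (F g : ℝ → ℝ) (l ε : ℝ) : Prop where
  continuousOn : ContinuousOn F (Icc 0 1)
  hasDerivAt : ∀ t ∈ Ioo (0:ℝ) 1, HasDerivAt F (g t) t
  osc : ∀ s ∈ Icc (0:ℝ) 1, ∀ t ∈ Icc (0:ℝ) 1, |s - t| ≤ l → |g s - g t| ≤ ε

namespace HasSmallDerivOsc

variable {F g : ℝ → ℝ} {l ε : ℝ}

theorem mono (hF : HasSmallDerivOsc F g l ε) {l' : ℝ} (hl' : l' ≤ l) :
    HasSmallDerivOsc F g l' ε :=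
  ⟨hF.continuousOn, hF.hasDerivAt, fun s hs t ht hst => hF.osc s hs t ht (hst.trans hl')⟩

theorem neg (hF : HasSmallDerivOsc F g l ε) :
    HasSmallDerivOsc (fun t => -F t) (fun t => -g t) l ε where
  continuousOn := hF.continuousOn.neg
  hasDerivAt t ht := (hF.hasDerivAt t ht).neg
  osc s hs t ht hst := by
    rw [neg_sub_neg, abs_sub_comm]
    exact hF.osc s hs t ht hst

theorem comp_one_sub (hF : HasSmallDerivOsc F g l ε) :
    HasSmallDerivOsc (fun t => F (1 - t)) (fun t => -g (1 - t)) l ε where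
  continuousOn := hF.continuousOn.comp (continuousOn_const.sub continuousOn_id)
    fun t ht => ⟨by linarith [ht.2], by linarith [ht.1]⟩
  hasDerivAt t ht := by
    have := (hF.hasDerivAt (1 - t) ⟨by linarith [ht.2], by linarith [ht.1]⟩).comp t
      ((hasDerivAt_id t).const_sub 1)
    simpa [Function.comp_def] using this
  osc s hs t ht hst := by
    rw [neg_sub_neg, abs_sub_comm]
    refine hF.osc _ ⟨by linarith [hs.2], by linarith [hs.1]⟩ _
      ⟨by linarith [ht.2], by linarith [ht.1]⟩ ?_
    rwa [sub_sub_sub_cancel_left, abs_sub_comm]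

end HasSmallDerivOsc

theorem IsC1.exists_hasSmallDerivOsc {f : UI → ℝ} (hf : IsC1 f) {ε : ℝ} (hε : 0 < ε) :
    ∃ g : ℝ → ℝ, ∃ l > 0, HasSmallDerivOsc (IccExtend zero_le_one f) g l ε := by
  have hF : ContDiffOn ℝ 1 (IccExtend zero_le_one f) (Icc 0 1) := hf
  have hg := hF.continuousOn_derivWithin (uniqueDiffOn_Icc one_pos) le_rfl
  obtain ⟨l, hl, hosc⟩ :=
    Metric.uniformContinuousOn_iff_le.1 (isCompact_Icc.uniformContinuousOn_of_continuous hg) ε hε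
  refine ⟨_, l, hl, hF.continuousOn, fun t ht => ?_, fun s hs t ht hst => hosc s hs t ht hst⟩
  exact ((hF.differentiableOn one_ne_zero t (Ioo_subset_Icc_self ht)).hasDerivWithinAt).hasDerivAt
    (Icc_mem_nhds ht.1 ht.2)

theorem HasSmallDerivOsc.exists_Ioo_pos {h h' : ℝ → ℝ} {l ε x y : ℝ}
    (hh : HasSmallDerivOsc h h' l ε) (hε : 0 ≤ ε) (hx0 : 0 ≤ x) (hxy : x < y) (hy1 : y ≤ 1)
    (hyl : y + l ≤ 1) (hx : h x ≤ 0) (hy : ε * (y - x) < h y) :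
    ∃ u ∈ Icc x y, ∀ t ∈ Ioo u (u + l), 0 < h t := by
  obtain ⟨c, ⟨hxc, hcy⟩, hc, hpos⟩ :=
    exists_last_nonpos hxy.le (hh.continuousOn.mono (Icc_subset_Icc hx0 hy1)) hx
  have hcy' : c < y := hcy.lt_of_ne (by rintro rfl; nlinarith)
  obtain ⟨ξ, ⟨hcξ, hξy⟩, hξ⟩ := exists_hasDerivAt_eq_slope h h' hcy'
    (hh.continuousOn.mono (Icc_subset_Icc (hx0.trans hxc) hy1))
    fun t ht => hh.hasDerivAt t ⟨by linarith [ht.1], by linarith [ht.2]⟩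
  have hξε : ε < h' ξ := by
    rw [hξ, lt_div_iff₀ (sub_pos.2 hcy')]
    nlinarith
  refine ⟨ξ, ⟨hxc.trans hcξ.le, hξy.le⟩, fun t ht => ?_⟩
  obtain ⟨η, ⟨hξη, hηt⟩, hη⟩ := exists_hasDerivAt_eq_slope h h' ht.1
    (hh.continuousOn.mono (Icc_subset_Icc (by linarith) (by linarith [ht.2])))
    fun s hs => hh.hasDerivAt s ⟨by linarith [hs.1], by linarith [hs.2, ht.2]⟩
  have hη_pos : 0 < h' η := by
    have := abs_le.1 (hh.osc η ⟨by linarith, by linarith [ht.2]⟩ ξ ⟨by linarith, by linarith⟩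
      (by rw [abs_of_pos (sub_pos.2 hξη)]; linarith [ht.2]))
    linarith
  rw [hη, div_pos_iff_of_pos_right (sub_pos.2 ht.1)] at hη_pos
  linarith [hpos ξ ⟨hcξ, hξy.le⟩]

theorem HasSmallDerivOsc.exists_Ioo_slope_gt {F g : ℝ → ℝ} {a b l x y : ℝ}
    (hF : HasSmallDerivOsc F g l (b - a)) (hab : a ≤ b) (hx0 : 0 ≤ x) (hxy : x < y)
    (hy1 : y ≤ 1) (hyl : y + l ≤ 1) (hslope : b * (y - x) < F y - F x) :
    ∃ u ∈ Icc x y, ∀ t ∈ Ioo u (u + l), a * (t - x) < F t - F x := by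
  have hh : HasSmallDerivOsc (fun t => F t - F x - a * (t - x)) (fun t => g t - a) l (b - a) :=
    { continuousOn := (hF.continuousOn.sub continuousOn_const).sub
        (continuousOn_const.mul (continuousOn_id.sub continuousOn_const))
      hasDerivAt := fun t ht => by
        have := ((hF.hasDerivAt t ht).sub_const (F x)).sub
          (((hasDerivAt_id t).sub_const x).const_mul a)
        simpa [Pi.sub_def] using this
      osc := fun s hs t ht hst => by simpa using hF.osc s hs t ht hst }
  obtain ⟨u, hu, hpos⟩ := hh.exists_Ioo_pos (sub_nonneg.2 hab) hx0 hxy hy1 hyl (by simp)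
    (by linarith)
  exact ⟨u, hu, fun t ht => sub_pos.1 (hpos t ht)⟩

section Cases

variable {f : UI → ℝ} {F g : ℝ → ℝ} {a b l : ℝ}

theorem NplusUp_neg : NplusUp (-f) b = NplusLow f b := by
  ext x
  simp only [NplusUp, NplusLow, mem_ofPred_eq, Pi.neg_apply]
  refine and_congr_right fun _ => forall₂_congr fun y _ => imp_congr_right fun _ => ?_
  constructor <;> intro h <;> linarith

theorem NminusUp_neg : NminusUp (-f) b = NminusLow f b := by
  ext x
  simp only [NminusUp, NminusLow, mem_ofPred_eq, Pi.neg_apply]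
  refine and_congr_right fun _ => forall₂_congr fun y _ => imp_congr_right fun _ => ?_
  constructor <;> intro h <;> linarith

theorem mem_NminusUp_of_symm_mem_NplusUp {x : UI} (hx : σ x ∈ NplusUp (fun y => -f (σ y)) b) :
    x ∈ NminusUp f b := by
  refine ⟨by linarith [hx.1, coe_symm_eq x], fun y hy1 hy2 => ?_⟩
  have := hx.2 (σ y) (by simp only [coe_symm_eq]; linarith) (by simp only [coe_symm_eq]; linarith)
  simp only [coe_symm_eq, symm_symm] at this
  linarith

theorem exists_Ioo_of_notMem_NplusUp (hFf : ∀ y : UI, F y = f y)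
    (hF : HasSmallDerivOsc F g l (b - a)) (hab : a ≤ b) (hl : l ≤ 2 ^ (-a) - 2 ^ (-b))
    {x : UI} (hx : (x:ℝ) ≤ 1 - 2 ^ (-a)) (hxN : x ∉ NplusUp f b) :
    ∃ u : ℝ, Ioo u (u + l) ⊆ Icc 0 1 ∧ ∀ y : UI, (y:ℝ) ∈ Ioo u (u + l) →
      (x:ℝ) ≤ y ∧ (y:ℝ) ≤ x + 2 ^ (-a) ∧ a * ((y:ℝ) - x) < f y - f x := by
  have hba : (2:ℝ) ^ (-b) ≤ 2 ^ (-a) := Real.rpow_le_rpow_of_exponent_le one_le_two (by linarith)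
  obtain ⟨y₀, hxy₀, hy₀, hslope⟩ : ∃ y₀ : UI, (x:ℝ) ≤ y₀ ∧ (y₀:ℝ) ≤ x + 2 ^ (-b) ∧
      b * ((y₀:ℝ) - x) < f y₀ - f x := by
    by_contra! h
    exact hxN ⟨by linarith, h⟩
  have hxy : (x:ℝ) < y₀ := hxy₀.lt_of_ne fun h => by
    rw [Subtype.ext h] at hslope
    simp at hslope
  rw [← hFf, ← hFf] at hslope
  obtain ⟨u, ⟨hxu, huy⟩, hu⟩ :=
    hF.exists_Ioo_slope_gt hab x.2.1 hxy y₀.2.2 (by linarith) hslope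
  refine ⟨u, fun t ht => ⟨by linarith [ht.1, x.2.1], by linarith [ht.2]⟩, fun y hy => ?_⟩
  have := hu y hy
  rw [hFf, hFf] at this
  exact ⟨by linarith [hy.1], by linarith [hy.2], this⟩

theorem exists_Ioo_of_notMem_NplusLow (hFf : ∀ y : UI, F y = f y)
    (hF : HasSmallDerivOsc F g l (b - a)) (hab : a ≤ b) (hl : l ≤ 2 ^ (-a) - 2 ^ (-b))
    {x : UI} (hx : (x:ℝ) ≤ 1 - 2 ^ (-a)) (hxN : x ∉ NplusLow f b) :
    ∃ u : ℝ, Ioo u (u + l) ⊆ Icc 0 1 ∧ ∀ y : UI, (y:ℝ) ∈ Ioo u (u + l) →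
      (x:ℝ) ≤ y ∧ (y:ℝ) ≤ x + 2 ^ (-a) ∧ f y - f x < -a * ((y:ℝ) - x) := by
  obtain ⟨u, hu, hy⟩ := exists_Ioo_of_notMem_NplusUp (f := -f) (fun y => by simp [hFf])
    hF.neg hab hl hx (by rwa [NplusUp_neg])
  refine ⟨u, hu, fun y hy' => ?_⟩
  obtain ⟨h₁, h₂, h₃⟩ := hy y hy'
  simp only [Pi.neg_apply] at h₃
  exact ⟨h₁, h₂, by linarith⟩

theorem exists_Ioo_of_notMem_NminusUp (hFf : ∀ y : UI, F y = f y)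
    (hF : HasSmallDerivOsc F g l (b - a)) (hab : a ≤ b) (hl : l ≤ 2 ^ (-a) - 2 ^ (-b))
    {x : UI} (hx : 2 ^ (-a) ≤ (x:ℝ)) (hxN : x ∉ NminusUp f b) :
    ∃ u : ℝ, Ioo u (u + l) ⊆ Icc 0 1 ∧ ∀ y : UI, (y:ℝ) ∈ Ioo u (u + l) →
      (x:ℝ) - 2 ^ (-a) ≤ y ∧ (y:ℝ) ≤ x ∧ f y - f x < a * ((y:ℝ) - x) := by
  obtain ⟨u, hu, hy⟩ := exists_Ioo_of_notMem_NplusUp (f := fun y => -f (σ y)) (x := σ x)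
    (fun y => by simp [coe_symm_eq, ← hFf]) hF.comp_one_sub.neg hab hl
    (by rw [coe_symm_eq]; linarith) (mt mem_NminusUp_of_symm_mem_NplusUp hxN)
  have hrefl : ∀ t ∈ Ioo (1 - u - l) (1 - u - l + l), 1 - t ∈ Ioo u (u + l) :=
    fun t ht => ⟨by linarith [ht.2], by linarith [ht.1]⟩
  refine ⟨1 - u - l, fun t ht => ?_, fun y hy' => ?_⟩
  · have := hu (hrefl t ht)
    exact ⟨by linarith [this.2], by linarith [this.1]⟩
  obtain ⟨h₁, h₂, h₃⟩ := hy (σ y) (by rw [coe_symm_eq]; exact hrefl y hy')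
  simp only [coe_symm_eq, symm_symm] at h₁ h₂ h₃
  exact ⟨by linarith, by linarith, by linarith⟩

theorem exists_Ioo_of_notMem_NminusLow (hFf : ∀ y : UI, F y = f y)
    (hF : HasSmallDerivOsc F g l (b - a)) (hab : a ≤ b) (hl : l ≤ 2 ^ (-a) - 2 ^ (-b))
    {x : UI} (hx : 2 ^ (-a) ≤ (x:ℝ)) (hxN : x ∉ NminusLow f b) :
    ∃ u : ℝ, Ioo u (u + l) ⊆ Icc 0 1 ∧ ∀ y : UI, (y:ℝ) ∈ Ioo u (u + l) →
      (x:ℝ) - 2 ^ (-a) ≤ y ∧ (y:ℝ) ≤ x ∧ -a * ((y:ℝ) - x) < f y - f x := by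
  obtain ⟨u, hu, hy⟩ := exists_Ioo_of_notMem_NminusUp (f := -f) (fun y => by simp [hFf])
    hF.neg hab hl hx (by rwa [NminusUp_neg])
  refine ⟨u, hu, fun y hy' => ?_⟩
  obtain ⟨h₁, h₂, h₃⟩ := hy y hy'
  simp only [Pi.neg_apply] at h₃
  exact ⟨h₁, h₂, by linarith⟩

end Cases

theorem exists_interval_of_C1_general (f : UI → ℝ) (hf : IsC1 f) (a b : ℝ)
    (hab : a < b) :
    ∃ l > 0,
      (∀ x : UI, (x:ℝ) ≤ 1 - 2^(-a) → x ∉ NplusUp f b →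
        ∃ u : ℝ, Set.Ioo u (u + l) ⊆ Set.Icc (0:ℝ) 1 ∧
          ∀ y : UI, (y:ℝ) ∈ Set.Ioo u (u + l) →
            (x:ℝ) ≤ (y:ℝ) ∧ (y:ℝ) ≤ (x:ℝ) + 2^(-a) ∧
              a * ((y:ℝ) - (x:ℝ)) < f y - f x) ∧
      (∀ x : UI, (x:ℝ) ≤ 1 - 2^(-a) → x ∉ NplusLow f b →
        ∃ u : ℝ, Set.Ioo u (u + l) ⊆ Set.Icc (0:ℝ) 1 ∧
          ∀ y : UI, (y:ℝ) ∈ Set.Ioo u (u + l) →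
            (x:ℝ) ≤ (y:ℝ) ∧ (y:ℝ) ≤ (x:ℝ) + 2^(-a) ∧
              f y - f x < -a * ((y:ℝ) - (x:ℝ))) ∧
      (∀ x : UI, 2^(-a) ≤ (x:ℝ) → x ∉ NminusUp f b →
        ∃ u : ℝ, Set.Ioo u (u + l) ⊆ Set.Icc (0:ℝ) 1 ∧
          ∀ y : UI, (y:ℝ) ∈ Set.Ioo u (u + l) →
            (x:ℝ) - 2^(-a) ≤ (y:ℝ) ∧ (y:ℝ) ≤ (x:ℝ) ∧
              f y - f x < a * ((y:ℝ) - (x:ℝ))) ∧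
      (∀ x : UI, 2^(-a) ≤ (x:ℝ) → x ∉ NminusLow f b →
        ∃ u : ℝ, Set.Ioo u (u + l) ⊆ Set.Icc (0:ℝ) 1 ∧
          ∀ y : UI, (y:ℝ) ∈ Set.Ioo u (u + l) →
            (x:ℝ) - 2^(-a) ≤ (y:ℝ) ∧ (y:ℝ) ≤ (x:ℝ) ∧
              -a * ((y:ℝ) - (x:ℝ)) < f y - f x) := by
  obtain ⟨g, l₀, hl₀, hF⟩ := hf.exists_hasSmallDerivOsc (sub_pos.2 hab)
  have hgap : 0 < (2:ℝ) ^ (-a) - 2 ^ (-b) :=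
    sub_pos.2 (Real.rpow_lt_rpow_of_exponent_lt one_lt_two (neg_lt_neg hab))
  have hFf : ∀ y : UI, IccExtend zero_le_one f y = f y := IccExtend_val _ f
  have hFl := hF.mono (min_le_left l₀ (2 ^ (-a) - 2 ^ (-b)))
  have hl := min_le_right l₀ (2 ^ (-a) - 2 ^ (-b))
  exact ⟨_, lt_min hl₀ hgap,
    fun _ hx hxN => exists_Ioo_of_notMem_NplusUp hFf hFl hab.le hl hx hxN,
    fun _ hx hxN => exists_Ioo_of_notMem_NplusLow hFf hFl hab.le hl hx hxN,
    fun _ hx hxN => exists_Ioo_of_notMem_NminusUp hFf hFl hab.le hl hx hxN,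
    fun _ hx hxN => exists_Ioo_of_notMem_NminusLow hFf hFl hab.le hl hx hxN⟩

/-- If `f ∈ C¹(I)` and `0 < a < b`, then there is `l > 0` such that each of the four sets
described in Proposition 3.18 contains an open interval of length `l`. -/
theorem exists_interval_of_C1 (f : UI → ℝ) (hf : IsC1 f) (a b : ℝ)
    (ha : 0 < a) (hab : a < b) :
    ∃ l > 0,
      (∀ x : UI, (x:ℝ) ≤ 1 - 2^(-a) → x ∉ NplusUp f b →
        ∃ u : ℝ, Set.Ioo u (u + l) ⊆ Set.Icc (0:ℝ) 1 ∧
          ∀ y : UI, (y:ℝ) ∈ Set.Ioo u (u + l) →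
            (x:ℝ) ≤ (y:ℝ) ∧ (y:ℝ) ≤ (x:ℝ) + 2^(-a) ∧
              a * ((y:ℝ) - (x:ℝ)) < f y - f x) ∧
      (∀ x : UI, (x:ℝ) ≤ 1 - 2^(-a) → x ∉ NplusLow f b →
        ∃ u : ℝ, Set.Ioo u (u + l) ⊆ Set.Icc (0:ℝ) 1 ∧
          ∀ y : UI, (y:ℝ) ∈ Set.Ioo u (u + l) →
            (x:ℝ) ≤ (y:ℝ) ∧ (y:ℝ) ≤ (x:ℝ) + 2^(-a) ∧
              f y - f x < -a * ((y:ℝ) - (x:ℝ))) ∧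
      (∀ x : UI, 2^(-a) ≤ (x:ℝ) → x ∉ NminusUp f b →
        ∃ u : ℝ, Set.Ioo u (u + l) ⊆ Set.Icc (0:ℝ) 1 ∧
          ∀ y : UI, (y:ℝ) ∈ Set.Ioo u (u + l) →
            (x:ℝ) - 2^(-a) ≤ (y:ℝ) ∧ (y:ℝ) ≤ (x:ℝ) ∧
              f y - f x < a * ((y:ℝ) - (x:ℝ))) ∧
      (∀ x : UI, 2^(-a) ≤ (x:ℝ) → x ∉ NminusLow f b →
        ∃ u : ℝ, Set.Ioo u (u + l) ⊆ Set.Icc (0:ℝ) 1 ∧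
          ∀ y : UI, (y:ℝ) ∈ Set.Ioo u (u + l) →
            (x:ℝ) - 2^(-a) ≤ (y:ℝ) ∧ (y:ℝ) ≤ (x:ℝ) ∧
              -a * ((y:ℝ) - (x:ℝ)) < f y - f x) :=
  exists_interval_of_C1_general f hf a b hab

end
end

section
/- Let f ∈ C(I) and a > 0. Suppose φ is a bump function of height h > 0 and width w > 0 located at Ĥ and Ȟ, where Ĥ and Ȟ are disjoint finite subsets of I. Then, setting g = f + φ, one has Ĥ ∩ N̂(f,a) ⊂ N̂(g,a) and Ȟ ∩ Ň(f,a) ⊂ Ň(g,a). -/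
open Filter Topology TopologicalSpace Set MeasureTheory

noncomputable section

/-! At a point of `Ĥ` the bump `φ` attains its maximum `‖φ‖`, so adding `φ` can only lower the
increments `f y - f x` measured from that point, which keeps the one-sided bounds defining `N̂`;
symmetrically, at a point of `Ȟ` it attains its minimum `-‖φ‖` and can only raise them. -/

theorem ContinuousMap.isMaxOn_of_apply_eq_norm {X : Type*} [TopologicalSpace X] [CompactSpace X]
    (φ : C(X, ℝ)) {x : X} (hx : φ x = ‖φ‖) : IsMaxOn φ univ x := fun y _ =>
  hx ▸ (le_abs_self (φ y)).trans (φ.norm_coe_le_norm y)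

theorem ContinuousMap.isMinOn_of_apply_eq_neg_norm {X : Type*} [TopologicalSpace X]
    [CompactSpace X] (φ : C(X, ℝ)) {x : X} (hx : φ x = -‖φ‖) : IsMinOn φ univ x := fun y _ =>
  hx ▸ neg_le_of_abs_le (φ.norm_coe_le_norm y)

section AddExtremal

variable {f g : UI → ℝ} {a : ℝ} {x : UI}

theorem mem_Nhat_add_of_isMaxOn (hx : x ∈ Nhat f a) (hg : IsMaxOn g univ x) :
    x ∈ Nhat (f + g) a := by
  have hdec : ∀ y, g y ≤ g x := fun y => hg (mem_univ y)
  rcases hx with ⟨hx, hbound⟩ | ⟨hx, hbound⟩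
  · exact Or.inl ⟨hx, fun y hy₁ hy₂ => by
      simp only [Pi.add_apply]; linarith [hbound y hy₁ hy₂, hdec y]⟩
  · exact Or.inr ⟨hx, fun y hy₁ hy₂ => by
      simp only [Pi.add_apply]; linarith [hbound y hy₁ hy₂, hdec y]⟩

theorem mem_Ncheck_add_of_isMinOn (hx : x ∈ Ncheck f a) (hg : IsMinOn g univ x) :
    x ∈ Ncheck (f + g) a := by
  have hinc : ∀ y, g x ≤ g y := fun y => hg (mem_univ y)
  rcases hx with ⟨hx, hbound⟩ | ⟨hx, hbound⟩
  · exact Or.inl ⟨hx, fun y hy₁ hy₂ => by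
      simp only [Pi.add_apply]; linarith [hbound y hy₁ hy₂, hinc y]⟩
  · exact Or.inr ⟨hx, fun y hy₁ hy₂ => by
      simp only [Pi.add_apply]; linarith [hbound y hy₁ hy₂, hinc y]⟩

end AddExtremal

theorem bump_easy_general (f φ : C(UI, ℝ)) (a h w : ℝ)
    (H1 H2 : Set UI) (hφ : IsBump φ h w H1 H2) :
    H1 ∩ Nhat ⇑f a ⊆ Nhat ⇑(f + φ) a ∧ H2 ∩ Ncheck ⇑f a ⊆ Ncheck ⇑(f + φ) a := by
  obtain ⟨-, hnorm, hφH1, hφH2, -, -⟩ := hφ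
  rw [ContinuousMap.coe_add]
  constructor
  · rintro x ⟨hxH1, hx⟩
    exact mem_Nhat_add_of_isMaxOn hx (φ.isMaxOn_of_apply_eq_norm (by rw [hφH1 x hxH1, hnorm]))
  · rintro x ⟨hxH2, hx⟩
    exact mem_Ncheck_add_of_isMinOn hx
      (φ.isMinOn_of_apply_eq_neg_norm (by rw [hφH2 x hxH2, hnorm]))

/-- Adding a bump function preserves membership of the located points:
`Ĥ ∩ N̂(f,a) ⊆ N̂(f+φ,a)` and `Ȟ ∩ Ň(f,a) ⊆ Ň(f+φ,a)`. -/
theorem bump_easy (f φ : C(UI, ℝ)) (a h w : ℝ) (ha : 0 < a) (hh : 0 < h) (hw : 0 < w)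
    (H1 H2 : Set UI) (h1fin : H1.Finite) (h2fin : H2.Finite) (hdisj : Disjoint H1 H2)
    (hφ : IsBump φ h w H1 H2) :
    H1 ∩ Nhat ⇑f a ⊆ Nhat ⇑(f + φ) a ∧ H2 ∩ Ncheck ⇑f a ⊆ Ncheck ⇑(f + φ) a :=
  bump_easy_general f φ a h w H1 H2 hφ

end
end

section
/- Let X be a Baire topological space and let A be a subset of the countable product X^ℕ (with the product topology) that is invariant under finite permutations and has the Baire property. Then A is either meagre or residual (comeagre) in X^ℕ. -/
open Filter Topology TopologicalSpace Set MeasureTheory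

noncomputable section

/-!
Write `A =ᵇ V` with `V` open. Coordinate permutations act on `X^ℕ` by homeomorphisms preserving
`A`, and any two nonempty open sets can be made to meet by one of them: a basic open set only
constrains finitely many coordinates, which a block swap moves past those constrained by the
other. If `V ≠ ∅`, translating `V` into an arbitrary nonempty open set `o` shows that `o` meets
an open set in which `A` is comeagre. By the Banach category theorem the union of all such open
sets is again one in which `A` is comeagre, and it is dense, so `A` is residual.
-/

open Function

section BanachCategory

variable {Y : Type*} [TopologicalSpace Y]

theorem IsMeagre.exists_nat_isNowhereDense {s : Set Y} (h : IsMeagre s) :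
    ∃ N : ℕ → Set Y, (∀ n, IsNowhereDense (N n)) ∧ s ⊆ ⋃ n, N n := by
  obtain ⟨S, hS, hSc, hsub⟩ := isMeagre_iff_countable_union_isNowhereDense.mp h
  obtain ⟨N, hN⟩ := (hSc.insert ∅).exists_eq_range (insert_nonempty _ _)
  refine ⟨N, fun n => ?_, ?_⟩
  · rcases (hN ▸ mem_range_self n : N n ∈ insert ∅ S) with h | h
    · simp [h]
    · exact hS _ h
  · rw [← sUnion_range, ← hN, sUnion_insert]
    exact hsub.trans subset_union_right

theorem isNowhereDense_iUnion_inter_of_pairwise_disjoint {ι : Type*} {V N : ι → Set Y}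
    (hV : ∀ i, IsOpen (V i)) (hdisj : Pairwise (Disjoint on V)) (hN : ∀ i, IsNowhereDense (N i)) :
    IsNowhereDense (⋃ i, N i ∩ V i) := by
  set M := ⋃ i, N i ∩ V i
  refine eq_empty_of_forall_notMem fun x hx => ?_
  obtain ⟨y, hyO, hyM⟩ := mem_closure_iff.mp (interior_subset hx) _ isOpen_interior hx
  obtain ⟨i, -, hyV⟩ := mem_iUnion.mp hyM
  have hMV : V i ∩ M ⊆ N i := by
    rintro z ⟨hzV, hzM⟩
    obtain ⟨j, hzN, hzVj⟩ := mem_iUnion.mp hzM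
    obtain rfl : j = i := by_contra fun hji => (hdisj hji).ne_of_mem hzVj hzV rfl
    exact hzN
  have hsub : interior (closure M) ∩ V i ⊆ interior (closure (N i)) :=
    interior_maximal
      (fun z hz => closure_mono hMV ((hV i).inter_closure ⟨hz.2, interior_subset hz.1⟩))
      (isOpen_interior.inter (hV i))
  rw [hN i] at hsub
  exact hsub ⟨hyO, hyV⟩

theorem isMeagre_iUnion_inter_of_pairwise_disjoint {ι : Type*} {V : ι → Set Y} {s : Set Y}
    (hV : ∀ i, IsOpen (V i)) (hdisj : Pairwise (Disjoint on V)) (h : ∀ i, IsMeagre (V i ∩ s)) :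
    IsMeagre (⋃ i, V i ∩ s) := by
  choose N hN hsub using fun i => (h i).exists_nat_isNowhereDense
  refine (isMeagre_iUnion fun n =>
    (isNowhereDense_iUnion_inter_of_pairwise_disjoint hV hdisj (hN · n)).isMeagre).mono ?_
  intro x hx
  obtain ⟨i, hxi⟩ := mem_iUnion.mp hx
  obtain ⟨n, hn⟩ := mem_iUnion.mp (hsub i hxi)
  exact mem_iUnion.mpr ⟨n, mem_iUnion.mpr ⟨i, hn, hxi.1⟩⟩

theorem exists_pairwiseDisjoint_refinement_dense {𝒰 : Set (Set Y)} (h𝒰 : ∀ U ∈ 𝒰, IsOpen U) :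
    ∃ 𝒱 : Set (Set Y), (∀ V ∈ 𝒱, IsOpen V ∧ ∃ U ∈ 𝒰, V ⊆ U) ∧ 𝒱.PairwiseDisjoint id ∧
      ⋃₀ 𝒰 ⊆ closure (⋃₀ 𝒱) := by
  let P : Set (Set Y) := {V | IsOpen V ∧ ∃ U ∈ 𝒰, V ⊆ U}
  obtain ⟨𝒱, h𝒱⟩ : ∃ 𝒱, Maximal (fun 𝒱 => 𝒱 ⊆ P ∧ 𝒱.PairwiseDisjoint id) 𝒱 :=
    zorn_subset _ fun c hc hchain => ⟨⋃₀ c,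
      ⟨sUnion_subset fun _ h => (hc h).1, (hchain.pairwiseDisjoint_sUnion id).2 fun _ h => (hc h).2⟩,
      fun _ => subset_sUnion_of_mem⟩
  refine ⟨𝒱, h𝒱.prop.1, h𝒱.prop.2, fun x ⟨U, hU, hxU⟩ => by_contra fun hx => ?_⟩
  -- Otherwise `U \ closure (⋃₀ 𝒱)` could be added to `𝒱`.
  have hnew : U ∩ (closure (⋃₀ 𝒱))ᶜ ∈ 𝒱 := by
    refine h𝒱.mem_of_prop_insert ⟨insert_subset
      ⟨(h𝒰 U hU).inter isClosed_closure.isOpen_compl, U, hU, inter_subset_left⟩ h𝒱.prop.1,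
      h𝒱.prop.2.insert fun V hV _ => ?_⟩
    exact (disjoint_compl_left.mono_left inter_subset_right).mono_right
      ((subset_sUnion_of_mem hV).trans subset_closure)
  exact hx (subset_closure ⟨_, hnew, hxU, hx⟩)

/-- **Banach category theorem.** -/
theorem isMeagre_sUnion_inter {𝒰 : Set (Set Y)} {s : Set Y}
    (h𝒰 : ∀ U ∈ 𝒰, IsOpen U ∧ IsMeagre (U ∩ s)) : IsMeagre (⋃₀ 𝒰 ∩ s) := by
  obtain ⟨𝒱, h𝒱, hdisj, hdense⟩ := exists_pairwiseDisjoint_refinement_dense fun U hU => (h𝒰 U hU).1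
  set W := ⋃₀ 𝒱
  have hW : IsOpen W := isOpen_sUnion fun V hV => (h𝒱 V hV).1
  have hfrontier : IsMeagre (frontier W) :=
    IsNowhereDense.isMeagre <| isClosed_frontier.isNowhereDense_iff.2 <| by
      rw [← frontier_compl]
      exact interior_frontier hW.isClosed_compl
  have hWs : IsMeagre (W ∩ s) := by
    rw [show W = ⋃ V : 𝒱, V from sUnion_eq_iUnion, iUnion_inter]
    refine isMeagre_iUnion_inter_of_pairwise_disjoint (fun V => (h𝒱 V V.2).1) hdisj.subtype
      fun V => ?_
    obtain ⟨U, hU, hVU⟩ := (h𝒱 V V.2).2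
    exact (h𝒰 U hU).2.mono (inter_subset_inter_left _ hVU)
  refine (hfrontier.union hWs).mono fun x ⟨hxU, hxs⟩ => ?_
  by_cases hxW : x ∈ W
  · exact Or.inr ⟨hxW, hxs⟩
  · exact Or.inl (hW.frontier_eq ▸ ⟨hdense hxU, hxW⟩)

end BanachCategory

theorem BaireMeasurableSet.isMeagre_or_mem_residual_of_transitive {Y : Type*}
    [TopologicalSpace Y] {A : Set Y} (hA : BaireMeasurableSet A)
    (htrans : ∀ U V : Set Y, IsOpen U → U.Nonempty → IsOpen V → V.Nonempty →
      ∃ Φ : Y ≃ₜ Y, Φ ⁻¹' A = A ∧ (Φ ⁻¹' U ∩ V).Nonempty) :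
    IsMeagre A ∨ A ∈ residual Y := by
  obtain ⟨V, hVo, hAV⟩ := hA.residualEq_isOpen
  rcases V.eq_empty_or_nonempty with rfl | hVne
  · exact Or.inl (eventuallyEq_empty.mp hAV)
  have hVA : IsMeagre (V ∩ Aᶜ) := eventuallyEq_empty.mp <| by
    simpa using ((EventuallyEq.refl _ V).inter hAV.symm.compl).symm
  set U := ⋃₀ {O | IsOpen O ∧ IsMeagre (O ∩ Aᶜ)}
  have hUA : IsMeagre (U ∩ Aᶜ) := isMeagre_sUnion_inter fun _ hO => hO
  have hU : IsOpen U := isOpen_sUnion fun _ hO => hO.1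
  have hUdense : Dense U := dense_iff_inter_open.2 fun o ho hone => by
    obtain ⟨Φ, hΦA, x, hxV, hxo⟩ := htrans V o hVo hVne ho hone
    have hΦVA : IsMeagre (Φ ⁻¹' V ∩ o ∩ Aᶜ) := by
      refine (hVA.preimage_of_isOpenMap Φ.continuous Φ.isOpenMap).mono ?_
      rw [preimage_inter, preimage_compl, hΦA]
      exact inter_subset_inter_left _ inter_subset_left
    have hsub : Φ ⁻¹' V ∩ o ⊆ U :=
      subset_sUnion_of_mem (show Φ ⁻¹' V ∩ o ∈ {O | IsOpen O ∧ IsMeagre (O ∩ Aᶜ)} from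
        ⟨(hVo.preimage Φ.continuous).inter ho, hΦVA⟩)
    exact ⟨x, hxo, hsub ⟨hxV, hxo⟩⟩
  right
  filter_upwards [residual_of_dense_open hU hUdense, hUA] with x hxU hx
  by_contra hxA
  exact hx ⟨hxU, hxA⟩

theorem IsOpen.exists_finset_forall_eqOn_mem {ι X : Type*} [TopologicalSpace X]
    {U : Set (ι → X)} (hU : IsOpen U) {w : ι → X} (hw : w ∈ U) :
    ∃ I : Finset ι, ∀ z, EqOn z w I → z ∈ U := by
  obtain ⟨I, u, hu, hIU⟩ := isOpen_pi_iff.mp hU w hw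
  exact ⟨I, fun z hz => hIU fun i hi => hz hi ▸ (hu i hi).2⟩

def blockSwap (N : ℕ) : Equiv.Perm ℕ :=
  Involutive.toPerm (fun j => if j < N then j + N else if j < 2 * N then j - N else j)
    (fun j => by dsimp only; split_ifs <;> omega)

theorem blockSwap_apply (N j : ℕ) :
    blockSwap N j = if j < N then j + N else if j < 2 * N then j - N else j := rfl

theorem blockSwap_apply_of_lt {N j : ℕ} (h : j < N) : blockSwap N j = j + N := if_pos h

@[simp]
theorem blockSwap_blockSwap (N j : ℕ) : blockSwap N (blockSwap N j) = j :=
  Involutive.toPerm_involutive _ j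

theorem finite_setOf_blockSwap_ne (N : ℕ) : {j | blockSwap N j ≠ j}.Finite :=
  (finite_Iio (2 * N)).subset fun j hj => by
    rw [mem_ofPred_eq, blockSwap_apply] at hj
    rw [mem_Iio]
    split_ifs at hj <;> omega

theorem exists_blockSwap_preimage_inter_nonempty {X : Type*} [TopologicalSpace X]
    {U V : Set (ℕ → X)} (hU : IsOpen U) (hUne : U.Nonempty) (hV : IsOpen V) (hVne : V.Nonempty) :
    ∃ N, ((fun x n => x (blockSwap N n)) ⁻¹' U ∩ V).Nonempty := by
  obtain ⟨w, hw⟩ := hUne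
  obtain ⟨v, hv⟩ := hVne
  obtain ⟨I, hI⟩ := hU.exists_finset_forall_eqOn_mem hw
  obtain ⟨J, hJ⟩ := hV.exists_finset_forall_eqOn_mem hv
  obtain ⟨N, hN⟩ := (I ∪ J).exists_nat_subset_range
  have hlt : ∀ i ∈ I ∪ J, i < N := fun i hi => Finset.mem_range.mp (hN hi)
  let z : ℕ → X := fun j => if j ∈ J then v j else w (blockSwap N j)
  refine ⟨N, z, hI _ fun i hi => ?_, hJ z fun j hj => if_pos hj⟩
  have hiJ : blockSwap N i ∉ J := fun h => by
    have := hlt _ (Finset.mem_union_right _ h)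
    rw [blockSwap_apply_of_lt (hlt i (Finset.mem_union_left _ hi))] at this
    omega
  simp only [z, if_neg hiJ, blockSwap_blockSwap]

theorem zero_one_law_general (X : Type*) [TopologicalSpace X] (A : Set (ℕ → X))
    (hinv : ∀ σ : Equiv.Perm ℕ, {n | σ n ≠ n}.Finite →
      ∀ x : ℕ → X, x ∈ A → (fun n => x (σ n)) ∈ A)
    (hA : BaireMeasurableSet A) :
    IsMeagre A ∨ A ∈ residual (ℕ → X) := by
  refine hA.isMeagre_or_mem_residual_of_transitive fun U V hU hUne hV hVne => ?_
  obtain ⟨N, hN⟩ := exists_blockSwap_preimage_inter_nonempty hU hUne hV hVne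
  have hinvN : ∀ x ∈ A, (fun n => x (blockSwap N n)) ∈ A := hinv _ (finite_setOf_blockSwap_ne N)
  refine ⟨(Homeomorph.piCongrLeft (blockSwap N)).symm, ?_, hN⟩
  ext x
  exact ⟨fun hx => by simpa using hinvN _ hx, hinvN x⟩

/-- **Topological zero-one law.** A subset of `X^ℕ` (with `X` Baire) that is invariant
under finite permutations and has the Baire property is either meagre or residual. -/
theorem zero_one_law (X : Type*) [TopologicalSpace X] [BaireSpace X] (A : Set (ℕ → X))
    (hinv : ∀ σ : Equiv.Perm ℕ, {n | σ n ≠ n}.Finite →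
      ∀ x : ℕ → X, x ∈ A → (fun n => x (σ n)) ∈ A)
    (hA : BaireMeasurableSet A) :
    IsMeagre A ∨ A ∈ residual (ℕ → X) :=
  zero_one_law_general X A hinv hA

end
end

section
/- Let n ∈ Z, δ ∈ Y, k ≥ 0, and suppose K = (K_n) ∈ S_k(n,δ). Then for every j ∈ ℕ, one has ⋂_{m=j}^∞ ⋃_{n ∈ A_j^m(n^k)} B(K_n, δ_m) ⊂ ⋃_{n=1}^∞ K_n. -/
open Filter Topology TopologicalSpace Set MeasureTheory

noncomputable section

/-!
Let `U_j^m = ⋃_{i ∈ A_j^m(n^k)} K_i`: closed, and increasing in `m`. Since `δ_m → 0`, the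
hypothesis puts `x` in the closure of `⋃_m U_j^m`, and this closure lies in `⋃_i K_i` by
induction on `j`. At level `1` the union is the fixed closed set `⋃_{i ≤ n_1} K_i`. At level
`j + 1`, a point of the closure outside the union stays away from each closed `U_{j+1}^M`, so it
is approximated by points entering the union at late stages `m`; the defining inclusion of
`𝒮_k(n,δ)` puts those within `δ_m` of `U_j^{m-1}`, hence the point is in the closure at level `j`.
-/

lemma nbhd_eq_thickening (A : Set UI) (r : ℝ) : nbhd A r = Metric.thickening r A :=
  Metric.thickening_eq_biUnion_ball.symm

section ClosureOfIncreasingUnion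

variable {X : Type*} [PseudoMetricSpace X]

lemma mem_closure_iUnion_of_eventually_mem_thickening {W : ℕ → Set X} {r : ℕ → ℝ} {x : X}
    (hr : Tendsto r atTop (𝓝 0)) (hx : ∀ᶠ m in atTop, x ∈ Metric.thickening (r m) (W m)) :
    x ∈ closure (⋃ m, W m) := by
  refine Metric.mem_closure_iff.2 fun ε hε => ?_
  obtain ⟨m, hxm, hrm⟩ := (hx.and (hr.eventually_lt_const hε)).exists
  obtain ⟨z, hz, hxz⟩ := Metric.mem_thickening_iff.1 hxm
  exact ⟨z, mem_iUnion.2 ⟨m, hz⟩, hxz.trans hrm⟩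

lemma closure_iUnion_subset_union_closure {U V : ℕ → Set X} {r : ℕ → ℝ} (hU : Monotone U)
    (hUc : ∀ m, IsClosed (U m)) (hr : Tendsto r atTop (𝓝 0))
    (hUV : ∀ᶠ m in atTop, U (m + 1) \ U m ⊆ Metric.thickening (r m) (V m)) :
    closure (⋃ m, U m) ⊆ (⋃ m, U m) ∪ closure (⋃ m, V m) := by
  intro x hx
  refine or_iff_not_imp_left.2 fun hxU => Metric.mem_closure_iff.2 fun ε hε => ?_
  obtain ⟨M, hM⟩ := eventually_atTop.1 (hUV.and (hr.eventually_lt_const (half_pos hε)))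
  obtain ⟨η, hη, hball⟩ :=
    Metric.isOpen_iff.1 (hUc M).isOpen_compl x fun h => hxU (mem_iUnion.2 ⟨M, h⟩)
  obtain ⟨y, hyU, hxy⟩ := Metric.mem_closure_iff.1 hx _ (lt_min hη (half_pos hε))
  obtain ⟨l, hyl, hyl'⟩ : ∃ l, y ∉ U (M + l) ∧ y ∈ U (M + l + 1) := by
    obtain ⟨m, hym⟩ := mem_iUnion.1 hyU
    refine Nat.exists_not_and_succ_of_not_zero_of_exists (p := fun l => y ∈ U (M + l))
      (hball (Metric.mem_ball.2 ((dist_comm y x).trans_lt (hxy.trans_le (min_le_left _ _)))))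
      ⟨m, hU (by omega) hym⟩
  obtain ⟨hsub, hrl⟩ := hM (M + l) (by omega)
  obtain ⟨z, hz, hyz⟩ := Metric.mem_thickening_iff.1 (hsub ⟨hyl', hyl⟩)
  refine ⟨z, mem_iUnion.2 ⟨M + l, hz⟩, ?_⟩
  calc dist x z ≤ dist x y + dist y z := dist_triangle x y z
    _ < ε / 2 + ε / 2 := add_lt_add (hxy.trans_le (min_le_right _ _)) (hyz.trans hrl)
    _ = ε := add_halves ε

end ClosureOfIncreasingUnion

section Aset

variable (n : ℕ → ℕ) (j : ℕ)

lemma Aset_finite (m : ℕ) : (Aset n j m).Finite :=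
  (finite_Icc _ _).union ((finite_Ico _ _).biUnion fun _ _ => finite_Icc _ _)

lemma Aset_subset_Ici_one (m : ℕ) : Aset n j m ⊆ Ici 1 := by
  rintro i (hi | hi)
  · exact hi.1
  · obtain ⟨_, _, hi⟩ := mem_iUnion₂.1 hi
    exact le_trans (by omega) hi.1

lemma Aset_mono : Monotone (Aset n j) := fun _ _ h =>
  union_subset_union_right _ (biUnion_mono (Ico_subset_Ico_right h) fun _ _ => le_rfl)

lemma Aset_one (m : ℕ) : Aset n 1 m = Icc 1 (n 1) := by
  refine union_eq_left.2 (iUnion₂_subset fun i _ => ?_)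
  simp

lemma isClosed_biUnion_Aset (K : ℕ → KSp) (m : ℕ) :
    IsClosed (⋃ i ∈ Aset n j m, (K i : Set UI)) :=
  (Aset_finite n j m).isClosed_biUnion fun i _ => (K i).isClosed

end Aset

lemma closure_iUnion_biUnion_Aset_subset {n : ℕ → ℕ} {δ : ℕ → ℝ} {k : ℕ} {K : ℕ → KSp}
    (hδ : Tendsto δ atTop (𝓝 0)) (hK : memS K n δ k) {j : ℕ} (hj : 1 ≤ j) :
    closure (⋃ m, ⋃ i ∈ Aset (shiftSeq n k) j m, (K i : Set UI)) ⊆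
      ⋃ i ∈ Ici 1, (K i : Set UI) := by
  induction j, hj using Nat.le_induction with
  | base =>
    simp only [Aset_one, iUnion_const]
    rw [← Aset_one _ 0, (isClosed_biUnion_Aset _ _ K 0).closure_eq]
    exact biUnion_subset_biUnion_left (Aset_subset_Ici_one _ _ 0)
  | succ j hj ih =>
    have hstep : ∀ᶠ m in atTop,
        (⋃ i ∈ Aset (shiftSeq n k) (j + 1) (m + 1), (K i : Set UI)) \
            ⋃ i ∈ Aset (shiftSeq n k) (j + 1) m, (K i : Set UI) ⊆
          Metric.thickening (δ (m + 1)) (⋃ i ∈ Aset (shiftSeq n k) j m, (K i : Set UI)) := by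
      filter_upwards [eventually_ge_atTop (j + 1)] with m hm
      have h := hK (j + 1) (m + 1) (by omega) (by omega)
      simp only [Nat.add_sub_cancel, nbhd_eq_thickening] at h
      rw [Metric.thickening_biUnion]
      exact (biUnion_sdiff_biUnion_subset _ _ _).trans h
    refine (closure_iUnion_subset_union_closure
      (fun _ _ h => biUnion_subset_biUnion_left (Aset_mono _ _ h))
      (isClosed_biUnion_Aset _ _ K) (hδ.comp (tendsto_add_atTop_nat 1)) hstep).trans ?_
    exact union_subset
      (iUnion_subset fun m => biUnion_subset_biUnion_left (Aset_subset_Ici_one _ _ m)) ih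

theorem inter_nbhd_subset_iUnion_general (n : ℕ → ℕ) (δ : ℕ → ℝ) (hδ : memY δ)
    (k : ℕ) (K : ℕ → KSp) (hK : memS K n δ k) (j : ℕ) (hj : 1 ≤ j) :
    (⋂ m ∈ Set.Ici j, ⋃ i ∈ Aset (shiftSeq n k) j m, nbhd (K i : Set UI) (δ m))
      ⊆ ⋃ i ∈ Set.Ici 1, (K i : Set UI) := by
  intro x hx
  refine closure_iUnion_biUnion_Aset_subset hδ.2.2 hK hj
    (mem_closure_iUnion_of_eventually_mem_thickening hδ.2.2 ?_)
  filter_upwards [eventually_ge_atTop j] with m hm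
  simpa only [Metric.thickening_biUnion, nbhd_eq_thickening] using mem_iInter₂.1 hx m hm

/-- If `K ∈ 𝒮_k(n,δ)`, then
`⋂_{m≥j} ⋃_{i ∈ A_j^m(n^k)} B(K_i, δ_m) ⊆ ⋃_{i≥1} K_i` for every `j ≥ 1`. -/
theorem inter_nbhd_subset_iUnion (n : ℕ → ℕ) (hn : memZ n) (δ : ℕ → ℝ) (hδ : memY δ)
    (k : ℕ) (K : ℕ → KSp) (hK : memS K n δ k) (j : ℕ) (hj : 1 ≤ j) :
    (⋂ m ∈ Set.Ici j, ⋃ i ∈ Aset (shiftSeq n k) j m, nbhd (K i : Set UI) (δ m))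
      ⊆ ⋃ i ∈ Set.Ici 1, (K i : Set UI) :=
  inter_nbhd_subset_iUnion_general n δ hδ k K hK j hj

end
end
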